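/- arXiv:2008.10503 — 4 statements merged into one kernel-verified Lean document; each statement's English description precedes it below -/
import Mathlib

section
/- Let U be an m×m orthogonal matrix, let B be a uniformly random diagonal 0/1 matrix with exactly n of its m diagonal entries equal to 1, and set Ψ = U(B − κ I_m)Uᵀ with κ = n/m. Then for any fixed indices a, b ∈ [m] and any ε > 0, P(|Ψ_{ab}| ≥ ε) ≤ 4 exp(−ε² / (8 m ‖U‖_∞⁴)), where ‖U‖_∞ is the maximum absolute value of an entry of U. -/
open Finset Matrix

variable {m : ℕ}

/-- Set of first `k` positions under permutation `π` (i.e. image of `{0,...,k-1}`). -/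
def firstSet (k : ℕ) (π : Equiv.Perm (Fin m)) : Finset (Fin m) :=
  univ.filter fun j => ((π.symm j : Fin m) : ℕ) < k

lemma firstSet_eq_map (k : ℕ) (π : Equiv.Perm (Fin m)) :
    firstSet k π = (univ.filter fun i : Fin m => (i : ℕ) < k).map
      (Equiv.toEmbedding π) := by
  ext j
  simp only [firstSet, Finset.mem_filter, Finset.mem_univ, true_and, Finset.mem_map,
    Equiv.coe_toEmbedding]
  constructor
  · intro h; exact ⟨π.symm j, h, π.apply_symm_apply j⟩
  · rintro ⟨i, hi, rfl⟩; rwa [Equiv.symm_apply_apply]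

lemma card_lt_filter (k : ℕ) (hk : k ≤ m) :
    (univ.filter fun i : Fin m => (i : ℕ) < k).card = k := by
  have : (univ.filter fun i : Fin m => (i : ℕ) < k)
      = (univ : Finset (Fin k)).map (Fin.castLEEmb hk) := by
    ext j
    simp only [Finset.mem_filter, Finset.mem_univ, true_and, Finset.mem_map]
    constructor
    · intro h
      refine ⟨⟨(j : ℕ), h⟩, ?_⟩
      simp [Fin.castLEEmb, Fin.ext_iff]
    · rintro ⟨i, rfl⟩
      simpa using i.2
  rw [this, Finset.card_map, Finset.card_univ, Fintype.card_fin]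

lemma card_firstSet (k : ℕ) (hk : k ≤ m) (π : Equiv.Perm (Fin m)) :
    (firstSet k π).card = k := by
  rw [firstSet_eq_map, Finset.card_map, card_lt_filter k hk]

lemma firstSet_mono {k k' : ℕ} (h : k ≤ k') (π : Equiv.Perm (Fin m)) :
    firstSet k π ⊆ firstSet k' π := by
  intro j hj
  simp only [firstSet, Finset.mem_filter, Finset.mem_univ, true_and] at hj ⊢
  omega

lemma exists_perm_image (s t : Finset (Fin m)) (h : s.card = t.card) :
    ∃ σ : Equiv.Perm (Fin m), s.image σ = t := by
  classical
  have hcc : (sᶜ).card = (tᶜ).card := by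
    rw [Finset.card_compl, Finset.card_compl, h]
  let e : {x // x ∈ s} ≃ {x // x ∈ t} := Finset.equivOfCardEq h
  let e' : {x // x ∈ sᶜ} ≃ {x // x ∈ tᶜ} := Finset.equivOfCardEq hcc
  let f : Fin m → Fin m := fun x =>
    if hx : x ∈ s then (e ⟨x, hx⟩ : Fin m) else (e' ⟨x, Finset.mem_compl.2 hx⟩ : Fin m)
  have hft : ∀ x (hx : x ∈ s), f x ∈ t := by
    intro x hx
    simp only [f, dif_pos hx]
    exact (e ⟨x, hx⟩).2
  have hftc : ∀ x (hx : x ∉ s), f x ∈ tᶜ := by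
    intro x hx
    simp only [f, dif_neg hx]
    exact (e' ⟨x, Finset.mem_compl.2 hx⟩).2
  have hinj : Function.Injective f := by
    intro x y hxy
    by_cases hx : x ∈ s <;> by_cases hy : y ∈ s
    · have := e.injective (Subtype.ext (by simpa only [f, dif_pos hx, dif_pos hy] using hxy))
      exact congrArg Subtype.val this
    · exact absurd (hxy ▸ hft x hx) (Finset.mem_compl.1 (hftc y hy))
    · exact absurd ((hxy.symm) ▸ hft y hy) (Finset.mem_compl.1 (hftc x hx))
    · have := e'.injective (Subtype.ext (by simpa only [f, dif_neg hx, dif_neg hy] using hxy))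
      have := congrArg Subtype.val this
      exact this
  let σ : Equiv.Perm (Fin m) := Equiv.ofBijective f (Finite.injective_iff_bijective.1 hinj)
  refine ⟨σ, ?_⟩
  apply Finset.eq_of_subset_of_card_le
  · intro y hy
    rw [Finset.mem_image] at hy
    obtain ⟨x, hx, rfl⟩ := hy
    exact hft x hx
  · rw [Finset.card_image_of_injective _ σ.injective, h]

lemma firstSet_mul (k : ℕ) (σ π : Equiv.Perm (Fin m)) :
    firstSet k (σ * π) = (firstSet k π).image σ := by
  ext j
  simp only [firstSet, Finset.mem_filter, Finset.mem_univ, true_and, Finset.mem_image,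
    Equiv.Perm.mul_apply, Equiv.Perm.coe_mul]
  constructor
  · intro hj
    refine ⟨σ.symm j, ?_, σ.apply_symm_apply j⟩
    exact hj
  · rintro ⟨i, hi, rfl⟩
    have hsymm : (σ * π).symm (σ i) = π.symm i := by
      rw [Equiv.symm_apply_eq]
      simp [Equiv.Perm.mul_apply]
    rw [hsymm]
    simpa using hi

/-- fibers of `π ↦ firstSet k π` all have the same cardinality -/
lemma perm_fiber_congr (k : ℕ) (t t' : Finset (Fin m)) (h : t.card = t'.card) :
    (univ.filter fun π : Equiv.Perm (Fin m) => firstSet k π = t).card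
      = (univ.filter fun π : Equiv.Perm (Fin m) => firstSet k π = t').card := by
  obtain ⟨σ, hσ⟩ := exists_perm_image t t' h
  have hσ' : t'.image ⇑σ⁻¹ = t := by
    rw [← hσ, Finset.image_image]
    simp [Function.comp_def, Equiv.Perm.inv_def]
  apply Finset.card_bij' (fun π _ => σ * π) (fun π' _ => σ⁻¹ * π')
  · intro π hπ
    rw [Finset.mem_filter] at hπ ⊢
    exact ⟨Finset.mem_univ _, by rw [firstSet_mul, hπ.2, hσ]⟩
  · intro π' hπ'
    rw [Finset.mem_filter] at hπ' ⊢
    exact ⟨Finset.mem_univ _, by rw [firstSet_mul, hπ'.2, hσ']⟩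
  · intro π _; group
  · intro π _; group

lemma perm_fiber_mul_choose (k : ℕ) (hk : k ≤ m) (t : Finset (Fin m)) (ht : t.card = k) :
    (univ.filter fun π : Equiv.Perm (Fin m) => firstSet k π = t).card * m.choose k
      = Nat.factorial m := by
  have htotal : (univ : Finset (Equiv.Perm (Fin m))).card
      = ∑ u ∈ (univ : Finset (Fin m)).powersetCard k,
          ((univ : Finset (Equiv.Perm (Fin m))).filter fun π => firstSet k π = u).card := by
    apply Finset.card_eq_sum_card_fiberwise
    intro π _
    rw [Finset.mem_coe, Finset.mem_powersetCard]
    exact ⟨Finset.subset_univ _, card_firstSet k hk π⟩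
  have hconst : ∀ u ∈ (univ : Finset (Fin m)).powersetCard k,
      ((univ : Finset (Equiv.Perm (Fin m))).filter fun π => firstSet k π = u).card
        = ((univ : Finset (Equiv.Perm (Fin m))).filter fun π => firstSet k π = t).card := by
    intro u hu
    rw [Finset.mem_powersetCard] at hu
    exact perm_fiber_congr k u t (by rw [hu.2, ht])
  rw [Finset.sum_congr rfl hconst, Finset.sum_const, Finset.card_powersetCard,
    smul_eq_mul, Finset.card_univ, Finset.card_univ, Fintype.card_fin,
    Fintype.card_perm, Fintype.card_fin] at htotal
  rw [mul_comm]
  exact htotal.symm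

/-- the i.i.d. Bernoulli set determined by `f` -/
def bSet (n : ℕ) (f : Fin m → Fin m) : Finset (Fin m) :=
  univ.filter fun i => ((f i : Fin m) : ℕ) < n

lemma bSet_comp (n : ℕ) (σ : Equiv.Perm (Fin m)) (f : Fin m → Fin m) :
    bSet n (f ∘ ⇑σ.symm) = (bSet n f).image σ := by
  ext j
  simp only [bSet, Finset.mem_filter, Finset.mem_univ, true_and, Finset.mem_image,
    Function.comp_apply]
  constructor
  · intro hj
    exact ⟨σ.symm j, hj, σ.apply_symm_apply j⟩
  · rintro ⟨i, hi, rfl⟩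
    rwa [Equiv.symm_apply_apply]

lemma bSet_fiber_congr (n : ℕ) (t t' : Finset (Fin m)) (h : t.card = t'.card) :
    (univ.filter fun f : Fin m → Fin m => bSet n f = t).card
      = (univ.filter fun f : Fin m → Fin m => bSet n f = t').card := by
  obtain ⟨σ, hσ⟩ := exists_perm_image t t' h
  have hσ' : t'.image ⇑σ⁻¹ = t := by
    rw [← hσ, Finset.image_image]
    simp [Function.comp_def, Equiv.Perm.inv_def]
  apply Finset.card_bij' (fun f _ => f ∘ ⇑σ.symm) (fun f' _ => f' ∘ ⇑(σ⁻¹).symm)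
  · intro f hf
    rw [Finset.mem_filter] at hf ⊢
    exact ⟨Finset.mem_univ _, by rw [bSet_comp, hf.2, hσ]⟩
  · intro f' hf'
    rw [Finset.mem_filter] at hf' ⊢
    refine ⟨Finset.mem_univ _, ?_⟩
    rw [bSet_comp, hf'.2]
    have : ⇑(σ⁻¹) = ⇑σ.symm := rfl
    rw [this] at hσ' ⊢
    exact hσ'
  · intro f _
    funext i
    simp [Equiv.Perm.inv_def]
  · intro f _
    funext i
    simp [Equiv.Perm.inv_def]

lemma bSet_card_fiber (n k : ℕ) (hk : k ≤ m) (t : Finset (Fin m)) (ht : t.card = k) :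
    (univ.filter fun f : Fin m → Fin m => (bSet n f).card = k).card
      = m.choose k * (univ.filter fun f : Fin m → Fin m => bSet n f = t).card := by
  have htotal : (univ.filter fun f : Fin m → Fin m => (bSet n f).card = k).card
      = ∑ u ∈ (univ : Finset (Fin m)).powersetCard k,
          ((univ.filter fun f : Fin m → Fin m => (bSet n f).card = k).filter
            fun f => bSet n f = u).card := by
    apply Finset.card_eq_sum_card_fiberwise
    intro f hf
    rw [Finset.mem_coe, Finset.mem_filter] at hf
    rw [Finset.mem_coe, Finset.mem_powersetCard]
    exact ⟨Finset.subset_univ _, hf.2⟩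
  have hclean : ∀ u ∈ (univ : Finset (Fin m)).powersetCard k,
      ((univ.filter fun f : Fin m → Fin m => (bSet n f).card = k).filter
        fun f => bSet n f = u).card
      = (univ.filter fun f : Fin m → Fin m => bSet n f = t).card := by
    intro u hu
    rw [Finset.mem_powersetCard] at hu
    rw [Finset.filter_filter]
    have : (univ.filter fun f : Fin m → Fin m => (bSet n f).card = k ∧ bSet n f = u)
        = univ.filter fun f : Fin m → Fin m => bSet n f = u := by
      apply Finset.filter_congr
      intro f _
      constructor
      · exact fun h => h.2
      · intro h; exact ⟨by rw [h, hu.2], h⟩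
    rw [this]
    exact bSet_fiber_congr n u t (by rw [hu.2, ht])
  rw [htotal, Finset.sum_congr rfl hclean, Finset.sum_const, Finset.card_powersetCard,
    Finset.card_univ, Fintype.card_fin, smul_eq_mul]

lemma countA (k : ℕ) (hk : k ≤ m) (P : Finset (Fin m) → Prop) [DecidablePred P] :
    (univ.filter fun π : Equiv.Perm (Fin m) => P (firstSet k π)).card * m.choose k
      = (((univ : Finset (Fin m)).powersetCard k).filter P).card * Nat.factorial m := by
  have hfib : (univ.filter fun π : Equiv.Perm (Fin m) => P (firstSet k π)).card
      = ∑ t ∈ ((univ : Finset (Fin m)).powersetCard k).filter P,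
          ((univ : Finset (Equiv.Perm (Fin m))).filter fun π => firstSet k π = t).card := by
    have h1 : (univ.filter fun π : Equiv.Perm (Fin m) => P (firstSet k π)).card
        = ∑ t ∈ ((univ : Finset (Fin m)).powersetCard k).filter P,
            ((univ.filter fun π : Equiv.Perm (Fin m) => P (firstSet k π)).filter
              fun π => firstSet k π = t).card := by
      apply Finset.card_eq_sum_card_fiberwise
      intro π hπ
      rw [Finset.mem_coe, Finset.mem_filter] at hπ
      rw [Finset.mem_coe, Finset.mem_filter, Finset.mem_powersetCard]
      exact ⟨⟨Finset.subset_univ _, card_firstSet k hk π⟩, hπ.2⟩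
    rw [h1]
    apply Finset.sum_congr rfl
    intro t ht
    rw [Finset.mem_filter] at ht
    rw [Finset.filter_filter]
    congr 1
    apply Finset.filter_congr
    intro π _
    constructor
    · exact fun h => h.2
    · exact fun h => ⟨by rw [h]; exact ht.2, h⟩
  rw [hfib, Finset.sum_mul]
  have : ∀ t ∈ ((univ : Finset (Fin m)).powersetCard k).filter P,
      ((univ : Finset (Equiv.Perm (Fin m))).filter fun π => firstSet k π = t).card * m.choose k
        = Nat.factorial m := by
    intro t ht
    rw [Finset.mem_filter, Finset.mem_powersetCard] at ht
    exact perm_fiber_mul_choose k hk t ht.1.2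
  rw [Finset.sum_congr rfl this, Finset.sum_const, smul_eq_mul]

lemma countB (n : ℕ) (Q : Finset (Fin m) → Prop) [DecidablePred Q] :
    ((univ : Finset (Equiv.Perm (Fin m) × (Fin m → Fin m))).filter
        fun ω => Q (firstSet ((bSet n ω.2).card) ω.1)).card
      = Nat.factorial m * (univ.filter fun f : Fin m → Fin m => Q (bSet n f)).card := by
  classical
  have hNle : ∀ f : Fin m → Fin m, (bSet n f).card ≤ m := by
    intro f
    calc (bSet n f).card ≤ (univ : Finset (Fin m)).card := Finset.card_le_card (Finset.subset_univ _)
    _ = m := by rw [Finset.card_univ, Fintype.card_fin]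
  -- fiberwise over the value of the random set
  have h1 : ((univ : Finset (Equiv.Perm (Fin m) × (Fin m → Fin m))).filter
        fun ω => Q (firstSet ((bSet n ω.2).card) ω.1)).card
      = ∑ t ∈ ((univ : Finset (Fin m)).powerset).filter Q,
          ((univ : Finset (Equiv.Perm (Fin m) × (Fin m → Fin m))).filter
            fun ω => firstSet ((bSet n ω.2).card) ω.1 = t).card := by
    have h0 : ((univ : Finset (Equiv.Perm (Fin m) × (Fin m → Fin m))).filter
        fun ω => Q (firstSet ((bSet n ω.2).card) ω.1)).card
      = ∑ t ∈ ((univ : Finset (Fin m)).powerset).filter Q,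
          (((univ : Finset (Equiv.Perm (Fin m) × (Fin m → Fin m))).filter
            fun ω => Q (firstSet ((bSet n ω.2).card) ω.1)).filter
            fun ω => firstSet ((bSet n ω.2).card) ω.1 = t).card := by
      apply Finset.card_eq_sum_card_fiberwise
      intro ω hω
      rw [Finset.mem_coe, Finset.mem_filter] at hω
      rw [Finset.mem_coe, Finset.mem_filter, Finset.mem_powerset]
      exact ⟨Finset.subset_univ _, hω.2⟩
    rw [h0]
    apply Finset.sum_congr rfl
    intro t ht
    rw [Finset.mem_filter] at ht
    rw [Finset.filter_filter]
    congr 1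
    apply Finset.filter_congr
    intro ω _
    constructor
    · exact fun h => h.2
    · exact fun h => ⟨by rw [h]; exact ht.2, h⟩
  -- each fiber is a product
  have h2 : ∀ t : Finset (Fin m),
      ((univ : Finset (Equiv.Perm (Fin m) × (Fin m → Fin m))).filter
            fun ω => firstSet ((bSet n ω.2).card) ω.1 = t).card
        = Nat.factorial m * (univ.filter fun f : Fin m → Fin m => bSet n f = t).card := by
    intro t
    have hprod : ((univ : Finset (Equiv.Perm (Fin m) × (Fin m → Fin m))).filter
            fun ω => firstSet ((bSet n ω.2).card) ω.1 = t)
        = ((univ : Finset (Equiv.Perm (Fin m))).filter fun π => firstSet t.card π = t) ×ˢ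
          ((univ : Finset (Fin m → Fin m)).filter fun f => (bSet n f).card = t.card) := by
      ext ω
      rw [Finset.mem_filter, Finset.mem_product, Finset.mem_filter, Finset.mem_filter]
      constructor
      · intro h
        have hcard : t.card = (bSet n ω.2).card := by
          rw [← h.2]
          exact card_firstSet _ (hNle ω.2) ω.1
        refine ⟨⟨Finset.mem_univ _, ?_⟩, Finset.mem_univ _, hcard.symm⟩
        rw [hcard]
        exact h.2
      · rintro ⟨⟨-, h1⟩, -, h2⟩
        refine ⟨Finset.mem_univ _, ?_⟩
        rw [h2]
        exact h1
    have htm : t.card ≤ m := by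
      calc t.card ≤ (univ : Finset (Fin m)).card := Finset.card_le_card (Finset.subset_univ _)
      _ = m := by rw [Finset.card_univ, Fintype.card_fin]
    rw [hprod, Finset.card_product, bSet_card_fiber n t.card htm t rfl, ← mul_assoc,
      perm_fiber_mul_choose t.card htm t rfl]
  -- pull in fiberwise decomposition of the RHS filter
  have h3 : (univ.filter fun f : Fin m → Fin m => Q (bSet n f)).card
      = ∑ t ∈ ((univ : Finset (Fin m)).powerset).filter Q,
          (univ.filter fun f : Fin m → Fin m => bSet n f = t).card := by
    have h0 : (univ.filter fun f : Fin m → Fin m => Q (bSet n f)).card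
        = ∑ t ∈ ((univ : Finset (Fin m)).powerset).filter Q,
            ((univ.filter fun f : Fin m → Fin m => Q (bSet n f)).filter
              fun f => bSet n f = t).card := by
      apply Finset.card_eq_sum_card_fiberwise
      intro f hf
      rw [Finset.mem_coe, Finset.mem_filter] at hf
      rw [Finset.mem_coe, Finset.mem_filter, Finset.mem_powerset]
      exact ⟨Finset.subset_univ _, hf.2⟩
    rw [h0]
    apply Finset.sum_congr rfl
    intro t ht
    rw [Finset.mem_filter] at ht
    rw [Finset.filter_filter]
    congr 1
    apply Finset.filter_congr
    intro f _
    constructor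
    · exact fun h => h.2
    · exact fun h => ⟨by rw [h]; exact ht.2, h⟩
  rw [h1, Finset.sum_congr rfl (fun t _ => h2 t), h3, Finset.mul_sum]

def Xsum (w : Fin m → ℝ) (κ : ℝ) (s : Finset (Fin m)) : ℝ :=
  ∑ i, w i * ((if i ∈ s then (1:ℝ) else 0) - κ)

lemma Xsum_diff (w : Fin m → ℝ) (κ c2 : ℝ) (hw : ∀ i, |w i| ≤ c2)
    {s t : Finset (Fin m)} (hst : s ⊆ t) :
    |Xsum w κ t - Xsum w κ s| ≤ ((t.card : ℝ) - s.card) * c2 := by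
  have hdiff : Xsum w κ t - Xsum w κ s = ∑ i ∈ t \ s, w i := by
    unfold Xsum
    rw [← Finset.sum_sub_distrib]
    have hterm : ∀ i ∈ (univ : Finset (Fin m)),
        w i * ((if i ∈ t then (1:ℝ) else 0) - κ) - w i * ((if i ∈ s then (1:ℝ) else 0) - κ)
          = if i ∈ t \ s then w i else 0 := by
      intro i _
      by_cases hit : i ∈ t <;> by_cases his : i ∈ s
      · rw [if_pos hit, if_pos his, if_neg (by simp [his])]
        ring
      · rw [if_pos hit, if_neg his, if_pos (Finset.mem_sdiff.2 ⟨hit, his⟩)]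
        ring
      · exact absurd (hst his) hit
      · rw [if_neg hit, if_neg his, if_neg (by simp [hit])]
        ring
    rw [Finset.sum_congr rfl hterm, Finset.sum_ite_mem, Finset.univ_inter]
  rw [hdiff]
  calc |∑ i ∈ t \ s, w i| ≤ ∑ i ∈ t \ s, |w i| := Finset.abs_sum_le_sum_abs _ _
    _ ≤ ∑ _i ∈ t \ s, c2 := Finset.sum_le_sum (fun i _ => hw i)
    _ = ((t \ s).card : ℝ) * c2 := by rw [Finset.sum_const, nsmul_eq_mul]
    _ = ((t.card : ℝ) - s.card) * c2 := by
        rw [Finset.card_sdiff_of_subset hst, Nat.cast_sub (Finset.card_le_card hst)]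

lemma exp_le_cosh_add {s u : ℝ} (hu : 0 < u) (hs : |s| ≤ u) :
    Real.exp s ≤ Real.cosh u + (s / u) * Real.sinh u := by
  have habs := abs_le.1 hs
  have h1 : ((u + s)/(2*u)) • u + ((u - s)/(2*u)) • (-u) = s := by
    rw [smul_eq_mul, smul_eq_mul]; field_simp; ring
  have h2 : (0:ℝ) ≤ (u + s)/(2*u) := by
    apply div_nonneg (by linarith [habs.1]) (by linarith)
  have h3 : (0:ℝ) ≤ (u - s)/(2*u) := by
    apply div_nonneg (by linarith [habs.2]) (by linarith)
  have h4 : ((u + s)/(2*u)) + ((u - s)/(2*u)) = 1 := by field_simp; ring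
  have key := convexOn_exp.2 (Set.mem_univ u) (Set.mem_univ (-u)) h2 h3 h4
  rw [h1] at key
  refine key.trans (le_of_eq ?_)
  rw [Real.cosh_eq, Real.sinh_eq, smul_eq_mul, smul_eq_mul]
  field_simp
  ring

lemma sum_exp_le {m : ℕ} (g : Fin m → ℝ) (B t : ℝ) (hB : 0 < B) (ht : 0 ≤ t)
    (hg0 : ∑ x, g x = 0) (hg : ∀ x, |g x| ≤ B) :
    ∑ x, Real.exp (t * g x) ≤ (m : ℝ) * Real.exp (t ^ 2 * B ^ 2 / 2) := by
  rcases eq_or_lt_of_le ht with h0 | htpos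
  · simp only [← h0, zero_mul, Real.exp_zero, Finset.sum_const, Finset.card_univ,
      Fintype.card_fin, nsmul_eq_mul, mul_one, ne_eq, OfNat.ofNat_ne_zero,
      not_false_eq_true, zero_pow, zero_div]
    nlinarith [Nat.cast_nonneg (α := ℝ) m]
  · have hu : 0 < t * B := by positivity
    calc ∑ x, Real.exp (t * g x)
        ≤ ∑ x, (Real.cosh (t*B) + ((t * g x) / (t*B)) * Real.sinh (t*B)) := by
          apply Finset.sum_le_sum
          intro x _
          apply exp_le_cosh_add hu
          rw [abs_mul, abs_of_pos htpos]
          exact mul_le_mul_of_nonneg_left (hg x) htpos.le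
      _ = (m : ℝ) * Real.cosh (t*B) + (Real.sinh (t*B) / (t*B)) * (t * ∑ x, g x) := by
          rw [Finset.sum_add_distrib, Finset.sum_const, Finset.card_univ, Fintype.card_fin,
            nsmul_eq_mul]
          congr 1
          rw [Finset.mul_sum, Finset.mul_sum]
          apply Finset.sum_congr rfl
          intro x _
          field_simp
      _ = (m : ℝ) * Real.cosh (t*B) := by rw [hg0]; ring
      _ ≤ (m : ℝ) * Real.exp ((t*B) ^ 2 / 2) := by
          have := Real.cosh_le_exp_half_sq (t*B)
          have hm0 : (0:ℝ) ≤ (m:ℝ) := Nat.cast_nonneg m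
          nlinarith
      _ = _ := by ring_nf

lemma chernoff_one {m : ℕ} (hm : 0 < m) (g : Fin m → Fin m → ℝ) (B ε : ℝ)
    (hB : 0 < B) (hε : 0 < ε)
    (hg0 : ∀ i, ∑ x, g i x = 0) (hg : ∀ i x, |g i x| ≤ B) :
    ((univ.filter fun f : Fin m → Fin m => ε ≤ ∑ i, g i (f i)).card : ℝ)
      ≤ (m : ℝ) ^ m * Real.exp (-(ε ^ 2) / (2 * m * B ^ 2)) := by
  set t : ℝ := ε / (m * B ^ 2) with htdef
  have hmR : (0:ℝ) < m := by exact_mod_cast hm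
  have ht : 0 < t := by positivity
  have key : ((univ.filter fun f : Fin m → Fin m => ε ≤ ∑ i, g i (f i)).card : ℝ)
      ≤ Real.exp (-(t*ε)) * ∏ i : Fin m, ∑ x : Fin m, Real.exp (t * g i x) := by
    rw [← Finset.sum_prod_piFinset (univ : Finset (Fin m)) (fun i x => Real.exp (t * g i x)),
      Fintype.piFinset_univ]
    calc ((univ.filter fun f : Fin m → Fin m => ε ≤ ∑ i, g i (f i)).card : ℝ)
        = ∑ _f ∈ (univ.filter fun f : Fin m → Fin m => ε ≤ ∑ i, g i (f i)), (1:ℝ) := by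
          simp
      _ ≤ ∑ f ∈ (univ.filter fun f : Fin m → Fin m => ε ≤ ∑ i, g i (f i)),
            Real.exp (t * (∑ i, g i (f i)) - t * ε) := by
          apply Finset.sum_le_sum
          intro f hf
          rw [Finset.mem_filter] at hf
          have : 0 ≤ t * (∑ i, g i (f i)) - t * ε := by nlinarith [hf.2]
          exact Real.one_le_exp this
      _ ≤ ∑ f : Fin m → Fin m, Real.exp (t * (∑ i, g i (f i)) - t * ε) := by
          apply Finset.sum_le_sum_of_subset_of_nonneg (Finset.filter_subset _ _)
          intro f _ _
          positivity
      _ = Real.exp (-(t*ε)) * ∑ f : Fin m → Fin m, ∏ i, Real.exp (t * g i (f i)) := by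
          rw [Finset.mul_sum]
          apply Finset.sum_congr rfl
          intro f _
          rw [← Real.exp_sum, ← Real.exp_add]
          congr 1
          rw [Finset.mul_sum]
          ring
  refine key.trans ?_
  have hprod : ∏ i : Fin m, ∑ x : Fin m, Real.exp (t * g i x)
      ≤ ∏ _i : Fin m, ((m : ℝ) * Real.exp (t ^ 2 * B ^ 2 / 2)) := by
    apply Finset.prod_le_prod
    · intro i _
      apply Finset.sum_nonneg
      intro x _
      positivity
    · intro i _
      exact sum_exp_le (g i) B t hB ht.le (hg0 i) (hg i)
  calc Real.exp (-(t*ε)) * ∏ i : Fin m, ∑ x : Fin m, Real.exp (t * g i x)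
      ≤ Real.exp (-(t*ε)) * ∏ _i : Fin m, ((m : ℝ) * Real.exp (t ^ 2 * B ^ 2 / 2)) := by
        apply mul_le_mul_of_nonneg_left hprod (Real.exp_nonneg _)
    _ = (m:ℝ) ^ m * Real.exp (-(t*ε) + m * (t^2 * B^2/2)) := by
        rw [Finset.prod_const, Finset.card_univ, Fintype.card_fin, mul_pow,
          ← Real.exp_nat_mul, ← mul_assoc, mul_comm (Real.exp (-(t*ε))), mul_assoc,
          ← Real.exp_add]
    _ = (m : ℝ) ^ m * Real.exp (-(ε ^ 2) / (2 * m * B ^ 2)) := by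
        congr 1
        rw [htdef]
        field_simp
        ring

lemma chernoff_abs {m : ℕ} (hm : 0 < m) (g : Fin m → Fin m → ℝ) (B ε : ℝ)
    (hB : 0 < B) (hε : 0 < ε)
    (hg0 : ∀ i, ∑ x, g i x = 0) (hg : ∀ i x, |g i x| ≤ B) :
    ((univ.filter fun f : Fin m → Fin m => ε ≤ |∑ i, g i (f i)|).card : ℝ)
      ≤ 2 * (m : ℝ) ^ m * Real.exp (-(ε ^ 2) / (2 * m * B ^ 2)) := by
  have hsub : (univ.filter fun f : Fin m → Fin m => ε ≤ |∑ i, g i (f i)|)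
      ⊆ (univ.filter fun f : Fin m → Fin m => ε ≤ ∑ i, g i (f i))
        ∪ (univ.filter fun f : Fin m → Fin m => ε ≤ ∑ i, (-g i) (f i)) := by
    intro f hf
    rw [Finset.mem_filter] at hf
    rw [Finset.mem_union, Finset.mem_filter, Finset.mem_filter]
    rcases abs_cases (∑ i, g i (f i)) with ⟨he, _⟩ | ⟨he, _⟩
    · left; exact ⟨Finset.mem_univ f, by rw [← he]; exact hf.2⟩
    · right
      refine ⟨Finset.mem_univ f, ?_⟩
      simp only [Pi.neg_apply, Finset.sum_neg_distrib]
      rw [← he]; exact hf.2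
  have h1 := chernoff_one hm g B ε hB hε hg0 hg
  have h2 := chernoff_one hm (fun i => -(g i)) B ε hB hε
    (fun i => by simp [hg0 i]) (fun i x => by simp [abs_neg]; exact hg i x)
  have := Finset.card_le_card hsub
  have hu := Finset.card_union_le
    (univ.filter fun f : Fin m → Fin m => ε ≤ ∑ i, g i (f i))
    (univ.filter fun f : Fin m → Fin m => ε ≤ ∑ i, (-g i) (f i))
  have : ((univ.filter fun f : Fin m → Fin m => ε ≤ |∑ i, g i (f i)|).card : ℝ)
      ≤ ((univ.filter fun f : Fin m → Fin m => ε ≤ ∑ i, g i (f i)).card : ℝ)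
        + ((univ.filter fun f : Fin m → Fin m => ε ≤ ∑ i, (-g i) (f i)).card : ℝ) := by
    exact_mod_cast le_trans (Nat.cast_le.mpr this) (Nat.cast_le.mpr hu)
  calc ((univ.filter fun f : Fin m → Fin m => ε ≤ |∑ i, g i (f i)|).card : ℝ)
      ≤ _ + _ := this
    _ ≤ (m : ℝ) ^ m * Real.exp (-(ε ^ 2) / (2 * m * B ^ 2))
        + (m : ℝ) ^ m * Real.exp (-(ε ^ 2) / (2 * m * B ^ 2)) := add_le_add h1 h2
    _ = 2 * (m : ℝ) ^ m * Real.exp (-(ε ^ 2) / (2 * m * B ^ 2)) := by ring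

theorem main_aux (m n : ℕ) (hm : 0 < m) (hn : n ≤ m) (κ : ℝ) (hκ : κ = (n : ℝ) / m)
    (w : Fin m → ℝ) (c2 : ℝ) (hc2 : 0 < c2) (hw : ∀ i, |w i| ≤ c2)
    (ε : ℝ) (hε : 0 < ε) :
    ((((univ : Finset (Fin m)).powersetCard n).filter
        (fun S : Finset (Fin m) => ε ≤ |Xsum w κ S|)).card : ℝ)
      ≤ 4 * Real.exp (-(ε ^ 2) / (8 * m * c2 ^ 2)) * (m.choose n) := by
  classical
  have hmR : (0:ℝ) < m := by exact_mod_cast hm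
  have hκ0 : 0 ≤ κ := by rw [hκ]; positivity
  have hκ1 : κ ≤ 1 := by
    rw [hκ, div_le_one hmR]
    exact_mod_cast hn
  have hNle : ∀ f : Fin m → Fin m, (bSet n f).card ≤ m := by
    intro f
    calc (bSet n f).card ≤ (univ : Finset (Fin m)).card :=
          Finset.card_le_card (Finset.subset_univ _)
    _ = m := by rw [Finset.card_univ, Fintype.card_fin]
  -- pointwise inclusion of events
  have hsub : ((univ : Finset (Equiv.Perm (Fin m) × (Fin m → Fin m))).filter
        fun ω => ε ≤ |Xsum w κ (firstSet n ω.1)|)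
      ⊆ ((univ : Finset (Equiv.Perm (Fin m) × (Fin m → Fin m))).filter
          fun ω => ε/2 ≤ |Xsum w κ (firstSet ((bSet n ω.2).card) ω.1)|)
        ∪ ((univ : Finset (Equiv.Perm (Fin m) × (Fin m → Fin m))).filter
          fun ω => ε/2 ≤ |(((bSet n ω.2).card : ℝ)) - n| * c2) := by
    intro ω hω
    rw [Finset.mem_filter] at hω
    have hdist : |Xsum w κ (firstSet n ω.1)
        - Xsum w κ (firstSet ((bSet n ω.2).card) ω.1)|
        ≤ |(((bSet n ω.2).card : ℝ)) - n| * c2 := by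
      rcases le_total n ((bSet n ω.2).card) with h | h
      · rw [abs_sub_comm]
        refine (Xsum_diff w κ c2 hw (firstSet_mono h ω.1)).trans (le_of_eq ?_)
        rw [card_firstSet n hn, card_firstSet _ (hNle ω.2)]
        congr 1
        rw [abs_of_nonneg (by simp only [sub_nonneg]; exact_mod_cast h)]
      · refine (Xsum_diff w κ c2 hw (firstSet_mono h ω.1)).trans (le_of_eq ?_)
        rw [card_firstSet n hn, card_firstSet _ (hNle ω.2)]
        congr 1
        rw [abs_of_nonpos (by simp only [sub_nonpos]; exact_mod_cast h), neg_sub]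
    rw [Finset.mem_union, Finset.mem_filter, Finset.mem_filter]
    by_cases h1 : ε/2 ≤ |Xsum w κ (firstSet ((bSet n ω.2).card) ω.1)|
    · exact Or.inl ⟨Finset.mem_univ _, h1⟩
    · push_neg at h1
      refine Or.inr ⟨Finset.mem_univ _, ?_⟩
      have habs : |Xsum w κ (firstSet n ω.1)|
          ≤ |Xsum w κ (firstSet ((bSet n ω.2).card) ω.1)|
            + |Xsum w κ (firstSet n ω.1)
                - Xsum w κ (firstSet ((bSet n ω.2).card) ω.1)| := by
        have := abs_sub_abs_le_abs_sub (Xsum w κ (firstSet n ω.1))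
          (Xsum w κ (firstSet ((bSet n ω.2).card) ω.1))
        linarith
      linarith [hω.2]
  -- abbreviations
  set Bad := ((univ : Finset (Fin m)).powersetCard n).filter
      (fun S : Finset (Fin m) => ε ≤ |Xsum w κ S|) with hBad
  set F1 := ((univ : Finset (Fin m → Fin m)).filter
      fun f => ε/2 ≤ |Xsum w κ (bSet n f)|).card with hF1def
  set F2 := ((univ : Finset (Fin m → Fin m)).filter
      fun f => ε/2 ≤ |(((bSet n f).card : ℝ)) - n| * c2).card with hF2def
  -- counting identities
  have hA := countA n hn (fun S => ε ≤ |Xsum w κ S|)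
  have hE0 : ((univ : Finset (Equiv.Perm (Fin m) × (Fin m → Fin m))).filter
        fun ω => ε ≤ |Xsum w κ (firstSet n ω.1)|).card
      = ((univ : Finset (Equiv.Perm (Fin m))).filter
          fun π => ε ≤ |Xsum w κ (firstSet n π)|).card * m ^ m := by
    have hps : ((univ : Finset (Equiv.Perm (Fin m) × (Fin m → Fin m))).filter
        fun ω => ε ≤ |Xsum w κ (firstSet n ω.1)|)
        = ((univ : Finset (Equiv.Perm (Fin m))).filter
            fun π => ε ≤ |Xsum w κ (firstSet n π)|) ×ˢ (univ : Finset (Fin m → Fin m)) := by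
      ext ω
      rw [Finset.mem_filter, Finset.mem_product, Finset.mem_filter]
      constructor
      · exact fun h => ⟨⟨Finset.mem_univ _, h.2⟩, Finset.mem_univ _⟩
      · exact fun h => ⟨Finset.mem_univ _, h.1.2⟩
    rw [hps, Finset.card_product, Finset.card_univ]
    congr 1
    simp [Fintype.card_fun]
  have hE1 := countB n (fun t => ε/2 ≤ |Xsum w κ t|)
  have hE2 : ((univ : Finset (Equiv.Perm (Fin m) × (Fin m → Fin m))).filter
        fun ω => ε/2 ≤ |(((bSet n ω.2).card : ℝ)) - n| * c2).card
      = Nat.factorial m * F2 := by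
    have hps : ((univ : Finset (Equiv.Perm (Fin m) × (Fin m → Fin m))).filter
        fun ω => ε/2 ≤ |(((bSet n ω.2).card : ℝ)) - n| * c2)
        = (univ : Finset (Equiv.Perm (Fin m))) ×ˢ
          ((univ : Finset (Fin m → Fin m)).filter
            fun f => ε/2 ≤ |(((bSet n f).card : ℝ)) - n| * c2) := by
      ext ω
      rw [Finset.mem_filter, Finset.mem_product, Finset.mem_filter]
      constructor
      · exact fun h => ⟨Finset.mem_univ _, Finset.mem_univ _, h.2⟩
      · exact fun h => ⟨Finset.mem_univ _, h.2.2⟩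
    rw [hps, Finset.card_product, Finset.card_univ, Fintype.card_perm, Fintype.card_fin]
  have hcard_le : ((univ : Finset (Equiv.Perm (Fin m) × (Fin m → Fin m))).filter
        fun ω => ε ≤ |Xsum w κ (firstSet n ω.1)|).card
      ≤ ((univ : Finset (Equiv.Perm (Fin m) × (Fin m → Fin m))).filter
          fun ω => ε/2 ≤ |Xsum w κ (firstSet ((bSet n ω.2).card) ω.1)|).card
        + ((univ : Finset (Equiv.Perm (Fin m) × (Fin m → Fin m))).filter
          fun ω => ε/2 ≤ |(((bSet n ω.2).card : ℝ)) - n| * c2).card :=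
    (Finset.card_le_card hsub).trans (Finset.card_union_le _ _)
  have keyN : Nat.factorial m * (Bad.card * m ^ m)
      ≤ Nat.factorial m * ((F1 + F2) * m.choose n) := by
    calc Nat.factorial m * (Bad.card * m ^ m)
        = (((univ : Finset (Equiv.Perm (Fin m))).filter
            fun π => ε ≤ |Xsum w κ (firstSet n π)|).card * m.choose n) * m ^ m := by
          rw [hA]; ring
      _ = (((univ : Finset (Equiv.Perm (Fin m))).filter
            fun π => ε ≤ |Xsum w κ (firstSet n π)|).card * m ^ m) * m.choose n := by ring
      _ = ((univ : Finset (Equiv.Perm (Fin m) × (Fin m → Fin m))).filter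
            fun ω => ε ≤ |Xsum w κ (firstSet n ω.1)|).card * m.choose n := by rw [hE0]
      _ ≤ (((univ : Finset (Equiv.Perm (Fin m) × (Fin m → Fin m))).filter
            fun ω => ε/2 ≤ |Xsum w κ (firstSet ((bSet n ω.2).card) ω.1)|).card
          + ((univ : Finset (Equiv.Perm (Fin m) × (Fin m → Fin m))).filter
            fun ω => ε/2 ≤ |(((bSet n ω.2).card : ℝ)) - n| * c2).card) * m.choose n :=
          Nat.mul_le_mul_right _ hcard_le
      _ = (Nat.factorial m * F1 + Nat.factorial m * F2) * m.choose n := by rw [hE1, hE2]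
      _ = Nat.factorial m * ((F1 + F2) * m.choose n) := by ring
  have keyN2 : Bad.card * m ^ m ≤ (F1 + F2) * m.choose n :=
    Nat.le_of_mul_le_mul_left keyN (Nat.factorial_pos m)
  -- Hoeffding bounds for the two binomial-type events
  have hmκ : (m : ℝ) * κ = n := by
    rw [hκ]
    field_simp
  have hsum1 : ∑ x : Fin m, (if ((x : Fin m) : ℕ) < n then (1:ℝ) else 0) = n := by
    rw [Finset.sum_boole]
    rw [card_lt_filter n hn]
  have hg'0 : ∀ _i : Fin m, ∑ x : Fin m,
      ((if ((x : Fin m) : ℕ) < n then (1:ℝ) else 0) - κ) = 0 := by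
    intro i
    rw [Finset.sum_sub_distrib, hsum1, Finset.sum_const, Finset.card_univ, Fintype.card_fin,
      nsmul_eq_mul, hmκ, sub_self]
  have hg'B : ∀ x : Fin m, |(if ((x : Fin m) : ℕ) < n then (1:ℝ) else 0) - κ| ≤ 1 := by
    intro x
    by_cases hx : ((x : Fin m) : ℕ) < n
    · rw [if_pos hx]
      rw [abs_le]
      constructor <;> linarith
    · rw [if_neg hx]
      rw [abs_le]
      constructor <;> linarith
  have hXb : ∀ f : Fin m → Fin m, Xsum w κ (bSet n f)
      = ∑ i, w i * ((if ((f i : Fin m) : ℕ) < n then (1:ℝ) else 0) - κ) := by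
    intro f
    unfold Xsum
    apply Finset.sum_congr rfl
    intro i _
    simp only [bSet, Finset.mem_filter, Finset.mem_univ, true_and]
  have hF1 : (F1 : ℝ) ≤ 2 * (m:ℝ) ^ m * Real.exp (-(ε^2) / (8 * m * c2 ^ 2)) := by
    have hfe : ((univ : Finset (Fin m → Fin m)).filter
        fun f => ε/2 ≤ |Xsum w κ (bSet n f)|)
        = (univ : Finset (Fin m → Fin m)).filter
            fun f => ε/2 ≤ |∑ i, (fun i x => w i *
              ((if ((x : Fin m) : ℕ) < n then (1:ℝ) else 0) - κ)) i (f i)| := by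
      apply Finset.filter_congr
      intro f _
      rw [hXb f]
    rw [hF1def, hfe]
    have hch := chernoff_abs hm (fun i x => w i *
        ((if ((x : Fin m) : ℕ) < n then (1:ℝ) else 0) - κ)) c2 (ε/2) hc2 (by positivity)
      (fun i => by rw [← Finset.mul_sum, hg'0 i, mul_zero])
      (fun i x => by
        rw [abs_mul]
        calc |w i| * |(if ((x : Fin m) : ℕ) < n then (1:ℝ) else 0) - κ|
            ≤ c2 * 1 := mul_le_mul (hw i) (hg'B x) (abs_nonneg _) hc2.le
          _ = c2 := mul_one c2)
    refine hch.trans (le_of_eq ?_)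
    congr 1
    have hc20 : c2 ≠ 0 := ne_of_gt hc2
    have hm0 : (m:ℝ) ≠ 0 := ne_of_gt hmR
    field_simp
    ring
  have hF2 : (F2 : ℝ) ≤ 2 * (m:ℝ) ^ m * Real.exp (-(ε^2) / (8 * m * c2 ^ 2)) := by
    have hNf : ∀ f : Fin m → Fin m, (((bSet n f).card : ℝ)) - n
        = ∑ i, ((if ((f i : Fin m) : ℕ) < n then (1:ℝ) else 0) - κ) := by
      intro f
      rw [Finset.sum_sub_distrib, Finset.sum_const, Finset.card_univ, Fintype.card_fin,
        nsmul_eq_mul, hmκ]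
      congr 1
      rw [Finset.sum_boole]
      rfl
    have hfe : ((univ : Finset (Fin m → Fin m)).filter
        fun f => ε/2 ≤ |(((bSet n f).card : ℝ)) - n| * c2)
        = (univ : Finset (Fin m → Fin m)).filter
            fun f => ε/(2*c2) ≤ |∑ i, (fun (_i : Fin m) x =>
              ((if ((x : Fin m) : ℕ) < n then (1:ℝ) else 0) - κ)) i (f i)| := by
      apply Finset.filter_congr
      intro f _
      rw [← hNf f, show ε/(2*c2) = (ε/2)/c2 by rw [div_div], div_le_iff₀ hc2]
    rw [hF2def, hfe]
    have hch := chernoff_abs hm (fun (_i : Fin m) x =>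
        ((if ((x : Fin m) : ℕ) < n then (1:ℝ) else 0) - κ)) 1 (ε/(2*c2)) one_pos
      (by positivity) hg'0 (fun _ x => hg'B x)
    refine hch.trans (le_of_eq ?_)
    congr 1
    have hc20 : c2 ≠ 0 := ne_of_gt hc2
    have hm0 : (m:ℝ) ≠ 0 := ne_of_gt hmR
    field_simp
    ring
  -- put everything together over ℝ
  have hcast : (Bad.card : ℝ) * (m:ℝ) ^ m ≤ ((F1 : ℝ) + (F2 : ℝ)) * (m.choose n : ℝ) := by
    exact_mod_cast keyN2
  have hpow : (0:ℝ) < (m:ℝ) ^ m := by positivity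
  have hfinal : (Bad.card : ℝ) * (m:ℝ) ^ m
      ≤ (4 * Real.exp (-(ε ^ 2) / (8 * m * c2 ^ 2)) * (m.choose n)) * (m:ℝ) ^ m := by
    calc (Bad.card : ℝ) * (m:ℝ) ^ m ≤ ((F1 : ℝ) + (F2 : ℝ)) * (m.choose n : ℝ) := hcast
      _ ≤ (2 * (m:ℝ) ^ m * Real.exp (-(ε^2) / (8 * m * c2 ^ 2))
            + 2 * (m:ℝ) ^ m * Real.exp (-(ε^2) / (8 * m * c2 ^ 2))) * (m.choose n : ℝ) := by
          apply mul_le_mul_of_nonneg_right (add_le_add hF1 hF2) (Nat.cast_nonneg _)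
      _ = (4 * Real.exp (-(ε ^ 2) / (8 * m * c2 ^ 2)) * (m.choose n)) * (m:ℝ) ^ m := by ring
  exact le_of_mul_le_mul_right hfinal hpow

/-- Concentration of the entries of `Ψ = U (B - κ I) Uᵀ`, where `B` is a uniformly random
diagonal 0/1 matrix with exactly `n` ones (encoded by a uniformly random `n`-subset `S`
of `[m]`) and `κ = n/m`: for any entry `(a,b)` and any `ε > 0`,
`P(|Ψ_{ab}| ≥ ε) ≤ 4 exp(-ε²/(8 m ‖U‖_∞⁴))`.  The probability is written as a counting
quotient over all `n`-subsets, and `‖U‖_∞` as any entrywise bound `c`. -/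
theorem stmt3 (m n : ℕ) (hn : n ≤ m) (κ : ℝ) (hκ : κ = (n : ℝ) / m)
    (U : Matrix (Fin m) (Fin m) ℝ) (hU : Uᵀ * U = 1)
    (c : ℝ) (hc : ∀ i j, |U i j| ≤ c)
    (a b : Fin m) (ε : ℝ) (hε : 0 < ε) :
    (((univ : Finset (Fin m)).powersetCard n).filter (fun S : Finset (Fin m) =>
          ε ≤ |∑ i, U a i * U b i * ((if i ∈ S then (1 : ℝ) else 0) - κ)|)).card
        / ((((univ : Finset (Fin m)).powersetCard n).card : ℝ))
      ≤ 4 * Real.exp (-(ε ^ 2) / (8 * m * c ^ 4)) := by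
  have hm : 0 < m := a.pos
  have hc0 : 0 ≤ c := (abs_nonneg _).trans (hc a a)
  rcases eq_or_lt_of_le hc0 with hc0' | hcpos
  · -- degenerate case c = 0 : all entries vanish
    have hU0 : ∀ i j, U i j = 0 := by
      intro i j
      have := hc i j
      rw [← hc0'] at this
      exact abs_eq_zero.1 (le_antisymm this (abs_nonneg _))
    have hemp : (((univ : Finset (Fin m)).powersetCard n).filter (fun S : Finset (Fin m) =>
          ε ≤ |∑ i, U a i * U b i * ((if i ∈ S then (1 : ℝ) else 0) - κ)|)) = ∅ := by
      apply Finset.filter_false_of_mem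
      intro S _
      rw [not_le]
      have : ∑ i, U a i * U b i * ((if i ∈ S then (1 : ℝ) else 0) - κ) = 0 :=
        Finset.sum_eq_zero fun i _ => by rw [hU0 a i, zero_mul, zero_mul]
      rw [this, abs_zero]
      exact hε
    rw [hemp]
    simp only [Finset.card_empty, Nat.cast_zero, zero_div]
    positivity
  · -- main case
    have key := main_aux m n hm hn κ hκ (fun i => U a i * U b i) (c ^ 2) (by positivity)
      (fun i => by
        rw [abs_mul]
        calc |U a i| * |U b i| ≤ c * c :=
              mul_le_mul (hc a i) (hc b i) (abs_nonneg _) hc0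
          _ = c ^ 2 := (sq c).symm)
      ε hε
    have hXeq : (((univ : Finset (Fin m)).powersetCard n).filter (fun S : Finset (Fin m) =>
          ε ≤ |∑ i, U a i * U b i * ((if i ∈ S then (1 : ℝ) else 0) - κ)|))
        = (((univ : Finset (Fin m)).powersetCard n).filter
            (fun S : Finset (Fin m) => ε ≤ |Xsum (fun i => U a i * U b i) κ S|)) := rfl
    rw [hXeq]
    have hdenom : ((((univ : Finset (Fin m)).powersetCard n).card : ℝ)) = (m.choose n : ℝ) := by
      rw [Finset.card_powersetCard, Finset.card_univ, Fintype.card_fin]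
    rw [hdenom]
    have hchoose : (0:ℝ) < (m.choose n : ℝ) := by
      exact_mod_cast Nat.choose_pos hn
    rw [div_le_iff₀ hchoose]
    have hexp : -(ε ^ 2) / (8 * m * (c ^ 2) ^ 2) = -(ε ^ 2) / (8 * m * c ^ 4) := by
      rw [← pow_mul]
    rw [hexp] at key
    exact key
end

section
/- Let k ≥ 2, let π be a partition of [k] with blocks V_1, …, V_{|π|}, and let w be a symmetric k×k matrix with nonnegative integer entries, zero diagonal, and which is disassortative with respect to π (meaning w_{ij} = 0 whenever i and j lie in the same block of π). For m = 2^ℓ, call a labelling a: blocks of π → [m] (injective on blocks) conflict-free if there are no two distinct pairs of blocks (s₁,t₁) ≠ (s₂,t₂) with s₁ < t₁, s₂ < t₂, total inter-block weight W_{s₁t₁}(w,π) ≥ 1 and W_{s₂t₂}(w,π) ≥ 1, and a_{V_{s₁}} ⊕ a_{V_{t₁}} = a_{V_{s₂}} ⊕ a_{V_{t₂}}, where ⊕ denotes bitwise XOR of the (shifted) binary representations. Then the number of labellings in C(π) (injective assignments of distinct values in [m] to the blocks) that are NOT conflict-free is at most |π|⁴ · m^{|π|−1}. -/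
open Finset

/-- Total weight of `w` between two blocks `S, T`:
`W_{ST}(w, π) = ∑_{i ∈ S} ∑_{j ∈ T} w_{ij}` (which for `S ≠ T` agrees with the sum of
`w_{ij}` over pairs `i < j` with `{π(i), π(j)} = {S, T}` when `w` is symmetric). -/
def interWeight {k : ℕ} (w : Fin k → Fin k → ℕ) (S T : Finset (Fin k)) : ℕ :=
  ∑ i ∈ S, ∑ j ∈ T, w i j

/-- A labelling `a` of the blocks of `π` by elements of `Fin m` (with `m = 2^ℓ`) has a
conflict if there are two distinct unordered pairs of distinct blocks, each carrying
positive inter-block weight, whose labels have equal bitwise XOR. -/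
def HasConflict {k m : ℕ} (π : Finpartition (univ : Finset (Fin k)))
    (w : Fin k → Fin k → ℕ) (a : ↥π.parts → Fin m) : Prop :=
  ∃ S T S' T' : ↥π.parts, S ≠ T ∧ S' ≠ T' ∧
    ¬(S = S' ∧ T = T') ∧ ¬(S = T' ∧ T = S') ∧
    1 ≤ interWeight w (S : Finset (Fin k)) (T : Finset (Fin k)) ∧
    1 ≤ interWeight w (S' : Finset (Fin k)) (T' : Finset (Fin k)) ∧
    (a S).val ^^^ (a T).val = (a S').val ^^^ (a T').val

/-- The number of injective labellings of the blocks of `π` by elements of `[m]`,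
`m = 2^ℓ`, that are NOT conflict-free is at most `|π|⁴ · m^{|π|-1}`, provided `w` is
symmetric, has zero diagonal, and is disassortative with respect to `π`. -/
theorem stmt4 (k ℓ m : ℕ) (hk : 2 ≤ k) (hm : m = 2 ^ ℓ)
    (π : Finpartition (univ : Finset (Fin k)))
    (w : Fin k → Fin k → ℕ) (hsym : ∀ i j, w i j = w j i) (hdiag : ∀ i, w i i = 0)
    (hDA : ∀ (i j : Fin k), ∀ B ∈ π.parts, i ∈ B → j ∈ B → w i j = 0) :
    {a : ↥π.parts → Fin m | Function.Injective a ∧ HasConflict π w a}.ncard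
      ≤ π.parts.card ^ 4 * m ^ (π.parts.card - 1) := by
  classical
  set P := ↥π.parts with hP
  set Bad := {a : P → Fin m | Function.Injective a ∧ HasConflict π w a} with hBad
  let pick : P × P × P × P → P := fun q =>
    if q.2.2.1 = q.1 ∨ q.2.2.1 = q.2.1 then q.2.2.2 else q.2.2.1
  let F : Bad → Σ q : P × P × P × P, ({y : P // y ≠ pick q} → Fin m) := fun a =>
    ⟨⟨a.2.2.choose, a.2.2.choose_spec.choose, a.2.2.choose_spec.choose_spec.choose,
      a.2.2.choose_spec.choose_spec.choose_spec.choose⟩,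
     fun y => a.1 y.1⟩
  have key : ∀ c : Bad, ∃ q : P × P × P × P,
      F c = ⟨q, fun y => c.1 y.1⟩ ∧
      (q.1 ≠ q.2.1 ∧ q.2.2.1 ≠ q.2.2.2 ∧
        ¬(q.1 = q.2.2.1 ∧ q.2.1 = q.2.2.2) ∧ ¬(q.1 = q.2.2.2 ∧ q.2.1 = q.2.2.1) ∧
        1 ≤ interWeight w (q.1 : Finset (Fin k)) (q.2.1 : Finset (Fin k)) ∧
        1 ≤ interWeight w (q.2.2.1 : Finset (Fin k)) (q.2.2.2 : Finset (Fin k)) ∧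
        (c.1 q.1).val ^^^ (c.1 q.2.1).val = (c.1 q.2.2.1).val ^^^ (c.1 q.2.2.2).val) := by
    intro c
    exact ⟨_, rfl, c.2.2.choose_spec.choose_spec.choose_spec.choose_spec⟩
  have hFinj : Function.Injective F := by
    intro a b hab
    obtain ⟨qa, hFa, speca⟩ := key a
    obtain ⟨qb, hFb, specb⟩ := key b
    rw [hFa, hFb] at hab
    have hq : qa = qb := congrArg Sigma.fst hab
    subst hq
    have hf : (fun y : {y : P // y ≠ pick qa} => a.1 y.1)
        = (fun y : {y : P // y ≠ pick qa} => b.1 y.1) :=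
      eq_of_heq (Sigma.mk.inj_iff.mp hab).2
    have hoff : ∀ y : P, y ≠ pick qa → a.1 y = b.1 y := fun y hy =>
      congrFun hf ⟨y, hy⟩
    obtain ⟨S, T, S', T'⟩ := qa
    obtain ⟨h1, h2, h3, h4, -, -, hxa⟩ := speca
    obtain ⟨-, -, -, -, -, -, hxb⟩ := specb
    simp only at h1 h2 h3 h4 hxa hxb
    have hx : a.1 (pick (S, T, S', T')) = b.1 (pick (S, T, S', T')) := by
      by_cases hcase : S' = S ∨ S' = T
      · -- pick = T', and T' ∉ {S, T, S'}
        have hpick : pick (S, T, S', T') = T' := if_pos hcase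
        rw [hpick]
        have hTS : T' ≠ S := by
          rintro rfl
          rcases hcase with h | h
          · exact h2 h
          · exact h4 ⟨rfl, h.symm⟩
        have hTT : T' ≠ T := by
          rintro rfl
          rcases hcase with h | h
          · exact h3 ⟨h.symm, rfl⟩
          · exact h2 h
        have hTS' : T' ≠ S' := fun h => h2 h.symm
        have eS := hoff S (by rw [hpick]; exact hTS.symm)
        have eT := hoff T (by rw [hpick]; exact hTT.symm)
        have eS' := hoff S' (by rw [hpick]; exact hTS'.symm)
        have : (a.1 T').val = (b.1 T').val := by
          have h5 : (a.1 T').val = (a.1 S').val ^^^ ((a.1 S).val ^^^ (a.1 T).val) := by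
            rw [hxa, ← Nat.xor_assoc, Nat.xor_self, Nat.zero_xor]
          have h6 : (b.1 T').val = (b.1 S').val ^^^ ((b.1 S).val ^^^ (b.1 T).val) := by
            rw [hxb, ← Nat.xor_assoc, Nat.xor_self, Nat.zero_xor]
          rw [h5, h6, eS, eT, eS']
        exact Fin.val_injective this
      · -- pick = S', and S' ∉ {S, T, T'}
        have hpick : pick (S, T, S', T') = S' := if_neg hcase
        rw [hpick]
        push_neg at hcase
        have eS := hoff S (by rw [hpick]; exact fun h => hcase.1 h.symm)
        have eT := hoff T (by rw [hpick]; exact fun h => hcase.2 h.symm)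
        have eT' := hoff T' (by rw [hpick]; exact fun h => h2 h.symm)
        have : (a.1 S').val = (b.1 S').val := by
          have h5 : (a.1 S').val = (a.1 T').val ^^^ ((a.1 S).val ^^^ (a.1 T).val) := by
            rw [hxa, Nat.xor_comm ((a.1 S').val), ← Nat.xor_assoc, Nat.xor_self, Nat.zero_xor]
          have h6 : (b.1 S').val = (b.1 T').val ^^^ ((b.1 S).val ^^^ (b.1 T).val) := by
            rw [hxb, Nat.xor_comm ((b.1 S').val), ← Nat.xor_assoc, Nat.xor_self, Nat.zero_xor]
          rw [h5, h6, eS, eT, eT']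
        exact Fin.val_injective this
    have : a.1 = b.1 := by
      funext y
      by_cases hy : y = pick (S, T, S', T')
      · rw [hy]; exact hx
      · exact hoff y hy
    exact Subtype.ext this
  -- counting
  have hle : Bad.ncard ≤ Nat.card (Σ q : P × P × P × P, ({y : P // y ≠ pick q} → Fin m)) := by
    rw [← Nat.card_coe_set_eq]
    exact Nat.card_le_card_of_injective F hFinj
  refine hle.trans ?_
  rw [Nat.card_eq_fintype_card, Fintype.card_sigma]
  have hcardP : Fintype.card P = π.parts.card := Fintype.card_coe _
  have hcard : ∀ q : P × P × P × P,
      Fintype.card ({y : P // y ≠ pick q} → Fin m) = m ^ (π.parts.card - 1) := by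
    intro q
    have h7 : Fintype.card {y : P // y ≠ pick q} = π.parts.card - 1 := by
      rw [Fintype.card_subtype_compl, Fintype.card_subtype_eq, hcardP]
    rw [Fintype.card_fun, Fintype.card_fin, h7]
  calc ∑ q : P × P × P × P, Fintype.card ({y : P // y ≠ pick q} → Fin m)
      = ∑ _q : P × P × P × P, m ^ (π.parts.card - 1) := by
        exact Finset.sum_congr rfl fun q _ => hcard q
    _ = π.parts.card ^ 4 * m ^ (π.parts.card - 1) := by
        rw [Finset.sum_const, Finset.card_univ]
        simp only [Fintype.card_prod, hcardP, smul_eq_mul]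
        ring
    _ ≤ π.parts.card ^ 4 * m ^ (π.parts.card - 1) := le_rfl
end

section
/- Let Ψ be an m×m symmetric matrix, Z, z̃ ∈ ℝ^m, and let A = A(Ψ, diag(z)) be an alternating product of the form p₁(Ψ) q₁(diag(z)) p₂(Ψ) ⋯ q_{k−1}(diag(z)) p_k(Ψ), where ‖Ψ‖_op ≤ 1 and the q_i are bounded Lipschitz. Then |zᵀ A(Ψ, diag(z)) z − z̃ᵀ A(Ψ, diag(z̃)) z̃| / m ≤ (C(A)/m) · (‖z‖₂² · ‖z − z̃‖_∞ + ‖z − z̃‖₂ · (‖z‖₂ + ‖z̃‖₂)), where C(A) depends only on k and the sup-norms and Lipschitz constants of the functions q_i, p_i appearing in A. -/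
open Matrix


open Matrix Polynomial Finset

namespace Stmt10Aux

variable {m : ℕ}

noncomputable def Nrm (x : Fin m → ℝ) : ℝ := Real.sqrt (∑ i, x i ^ 2)

lemma Nrm_nonneg (x : Fin m → ℝ) : 0 ≤ Nrm x := Real.sqrt_nonneg _

lemma Nrm_mul_self (x : Fin m → ℝ) : Nrm x * Nrm x = ∑ i, x i ^ 2 :=
  Real.mul_self_sqrt (Finset.sum_nonneg fun _ _ => sq_nonneg _)

lemma abs_dot_le (x y : Fin m → ℝ) : |x ⬝ᵥ y| ≤ Nrm x * Nrm y := by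
  have h := Finset.sum_mul_sq_le_sq_mul_sq Finset.univ x y
  have h2 : |x ⬝ᵥ y| ^ 2 ≤ (Nrm x * Nrm y) ^ 2 := by
    rw [sq_abs, mul_pow, Nrm, Nrm, Real.sq_sqrt (Finset.sum_nonneg fun _ _ => sq_nonneg _),
      Real.sq_sqrt (Finset.sum_nonneg fun _ _ => sq_nonneg _)]
    exact h
  have h3 := Real.sqrt_le_sqrt h2
  rwa [Real.sqrt_sq (abs_nonneg _),
    Real.sqrt_sq (mul_nonneg (Nrm_nonneg x) (Nrm_nonneg y))] at h3

lemma Nrm_add_le (x y : Fin m → ℝ) : Nrm (x + y) ≤ Nrm x + Nrm y := by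
  have key : ∑ i, (x i + y i) ^ 2 ≤ (Nrm x + Nrm y) ^ 2 := by
    have hxy : ∑ i, x i * y i ≤ Nrm x * Nrm y :=
      (le_abs_self _).trans (abs_dot_le x y)
    have : ∑ i, (x i + y i) ^ 2 = (∑ i, x i ^ 2) + 2 * (∑ i, x i * y i) + ∑ i, y i ^ 2 := by
      simp_rw [add_sq, mul_assoc]
      rw [Finset.sum_add_distrib, Finset.sum_add_distrib, ← Finset.mul_sum]
    rw [this, add_sq, ← Nrm_mul_self x, ← Nrm_mul_self y]
    nlinarith
  have h3 := Real.sqrt_le_sqrt key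
  rw [Real.sqrt_sq (add_nonneg (Nrm_nonneg x) (Nrm_nonneg y))] at h3
  simpa [Nrm] using h3

def OpB (A : Matrix (Fin m) (Fin m) ℝ) (c : ℝ) : Prop :=
  ∀ x, Nrm (A.mulVec x) ≤ c * Nrm x

lemma OpB.mono {A : Matrix (Fin m) (Fin m) ℝ} {c d : ℝ} (h : OpB A c) (hcd : c ≤ d) :
    OpB A d := fun x => (h x).trans (mul_le_mul_of_nonneg_right hcd (Nrm_nonneg x))

lemma OpB.zero : OpB (0 : Matrix (Fin m) (Fin m) ℝ) 0 := by
  intro x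
  simp [Nrm, Matrix.zero_mulVec]

lemma OpB.one : OpB (1 : Matrix (Fin m) (Fin m) ℝ) 1 := by
  intro x
  simp [Matrix.one_mulVec]

lemma OpB.add {A B : Matrix (Fin m) (Fin m) ℝ} {a b : ℝ} (hA : OpB A a) (hB : OpB B b) :
    OpB (A + B) (a + b) := by
  intro x
  rw [Matrix.add_mulVec]
  calc Nrm (A.mulVec x + B.mulVec x) ≤ Nrm (A.mulVec x) + Nrm (B.mulVec x) := Nrm_add_le _ _
    _ ≤ a * Nrm x + b * Nrm x := add_le_add (hA x) (hB x)
    _ = (a + b) * Nrm x := (add_mul _ _ _).symm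

lemma OpB.mul {A B : Matrix (Fin m) (Fin m) ℝ} {a b : ℝ} (hA : OpB A a) (hB : OpB B b)
    (ha : 0 ≤ a) : OpB (A * B) (a * b) := by
  intro x
  rw [← Matrix.mulVec_mulVec]
  calc Nrm (A.mulVec (B.mulVec x)) ≤ a * Nrm (B.mulVec x) := hA _
    _ ≤ a * (b * Nrm x) := mul_le_mul_of_nonneg_left (hB x) ha
    _ = a * b * Nrm x := (mul_assoc _ _ _).symm

lemma OpB.smul {A : Matrix (Fin m) (Fin m) ℝ} {a : ℝ} (hA : OpB A a) (r : ℝ) :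
    OpB (r • A) (|r| * a) := by
  intro x
  rw [Matrix.smul_mulVec]
  have : Nrm (r • A.mulVec x) = |r| * Nrm (A.mulVec x) := by
    simp only [Nrm, Pi.smul_apply, smul_eq_mul, mul_pow, ← Finset.mul_sum]
    rw [Real.sqrt_mul (sq_nonneg r), Real.sqrt_sq_eq_abs]
  rw [this, mul_assoc]
  exact mul_le_mul_of_nonneg_left (hA x) (abs_nonneg r)

lemma OpB.diagonal {d : Fin m → ℝ} {c : ℝ} (hc : 0 ≤ c) (h : ∀ i, |d i| ≤ c) :
    OpB (Matrix.diagonal d) c := by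
  intro x
  have key : ∑ i, ((Matrix.diagonal d).mulVec x i) ^ 2 ≤ c ^ 2 * ∑ i, x i ^ 2 := by
    rw [Finset.mul_sum]
    refine Finset.sum_le_sum fun i _ => ?_
    rw [Matrix.mulVec_diagonal, mul_pow]
    have : d i ^ 2 ≤ c ^ 2 := by
      rw [← sq_abs]
      exact pow_le_pow_left₀ (abs_nonneg _) (h i) 2
    exact mul_le_mul_of_nonneg_right this (sq_nonneg _)
  have h3 := Real.sqrt_le_sqrt key
  rwa [Real.sqrt_mul (sq_nonneg c), Real.sqrt_sq hc] at h3

lemma OpB.pow {Ψ : Matrix (Fin m) (Fin m) ℝ} (hΨ : OpB Ψ 1) (n : ℕ) : OpB (Ψ ^ n) 1 := by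
  induction n with
  | zero => simpa using OpB.one
  | succ n ih =>
    rw [pow_succ]
    simpa using ih.mul hΨ zero_le_one

lemma OpB.sum {ι : Type*} {s : Finset ι} {f : ι → Matrix (Fin m) (Fin m) ℝ} {c : ι → ℝ}
    (h : ∀ i ∈ s, OpB (f i) (c i)) : OpB (∑ i ∈ s, f i) (∑ i ∈ s, c i) := by
  induction s using Finset.cons_induction with
  | empty => simpa using OpB.zero
  | cons a s ha ih =>
    rw [Finset.sum_cons, Finset.sum_cons]
    exact (h a (Finset.mem_cons_self a s)).add (ih fun i hi => h i (Finset.mem_cons_of_mem hi))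

lemma OpB.aeval {Ψ : Matrix (Fin m) (Fin m) ℝ} (hΨ : OpB Ψ 1) (p : ℝ[X]) :
    OpB (Polynomial.aeval Ψ p) (∑ j ∈ Finset.range (p.natDegree + 1), |p.coeff j|) := by
  rw [Polynomial.aeval_eq_sum_range]
  refine OpB.sum fun j _ => ?_
  simpa using (hΨ.pow j).smul (p.coeff j)

lemma OpB.list_prod {c : ℝ} (hc : 1 ≤ c) :
    ∀ l : List (Matrix (Fin m) (Fin m) ℝ), (∀ A ∈ l, OpB A c) →
      OpB l.prod (c ^ l.length) := by
  intro l
  induction l with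
  | nil => intro _; simpa using OpB.one
  | cons A t ih =>
    intro h
    rw [List.prod_cons, List.length_cons, pow_succ, mul_comm (c ^ t.length) c]
    exact (h A List.mem_cons_self).mul (ih fun B hB => h B (List.mem_cons_of_mem _ hB))
      (zero_le_one.trans hc)

lemma OpB.tele {c ε : ℝ} (hc : 1 ≤ c) (hε : 0 ≤ ε) :
    ∀ (k : ℕ) (f g : Fin k → Matrix (Fin m) (Fin m) ℝ),
      (∀ i, OpB (f i) c) → (∀ i, OpB (g i) c) → (∀ i, OpB (f i - g i) ε) →
      OpB ((List.ofFn f).prod - (List.ofFn g).prod) (k * c ^ k * ε) := by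
  intro k
  induction k with
  | zero =>
    intro f g _ _ _
    simpa using OpB.zero.mono (by norm_num)
  | succ k ih =>
    intro f g hf hg hd
    have hc0 : (0:ℝ) ≤ c := zero_le_one.trans hc
    rw [List.ofFn_succ, List.ofFn_succ, List.prod_cons, List.prod_cons]
    have hP1 : OpB (List.ofFn fun i : Fin k => f i.succ).prod (c ^ k) := by
      have := OpB.list_prod hc (List.ofFn fun i : Fin k => f i.succ) (by
        intro A hA
        obtain ⟨i, rfl⟩ := List.mem_ofFn.mp hA
        exact hf _)
      simpa using this
    have hrec : OpB ((List.ofFn fun i : Fin k => f i.succ).prod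
        - (List.ofFn fun i : Fin k => g i.succ).prod)
        (k * c ^ k * ε) := ih _ _ (fun i => hf _) (fun i => hg _) (fun i => hd _)
    have key : f 0 * (List.ofFn fun i : Fin k => f i.succ).prod
          - g 0 * (List.ofFn fun i : Fin k => g i.succ).prod
        = (f 0 - g 0) * (List.ofFn fun i : Fin k => f i.succ).prod
          + g 0 * ((List.ofFn fun i : Fin k => f i.succ).prod
              - (List.ofFn fun i : Fin k => g i.succ).prod) := by
      rw [sub_mul, mul_sub]
      abel
    rw [key]
    have h1 := (hd 0).mul hP1 hε
    have h2 := (hg 0).mul hrec hc0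
    refine (h1.add h2).mono ?_
    have hpow : c ^ k ≤ c ^ (k + 1) := pow_le_pow_right₀ hc (Nat.le_succ k)
    push_cast
    have e1 : ε * c ^ k ≤ ε * c ^ (k + 1) := mul_le_mul_of_nonneg_left hpow hε
    have e2 : c * (↑k * c ^ k * ε) = ↑k * c ^ (k + 1) * ε := by rw [pow_succ]; ring
    have e3 : (↑k + 1) * c ^ (k + 1) * ε = ↑k * c ^ (k + 1) * ε + ε * c ^ (k + 1) := by ring
    linarith

lemma quad {A : Matrix (Fin m) (Fin m) ℝ} {c : ℝ} (hA : OpB A c) (x y : Fin m → ℝ) :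
    |x ⬝ᵥ A.mulVec y| ≤ Nrm x * (c * Nrm y) :=
  (abs_dot_le x _).trans (mul_le_mul_of_nonneg_left (hA y) (Nrm_nonneg x))

end Stmt10Aux

open Stmt10Aux

/-- Continuity estimate for the quadratic form of an alternating product
`A(Ψ, diag z) = p₁(Ψ) q₁(diag z) p₂(Ψ) ⋯ q_k(diag z) p_{k+1}(Ψ)`:
there is a constant `C` (depending only on `k`, the polynomials `p_i`, the sup-norm
bound `Q` and the Lipschitz constant `L` of the `q_i`) such that for any `m`, any
symmetric `Ψ` with `‖Ψ‖_op ≤ 1` and any `z, z̃ ∈ ℝ^m`,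
`|zᵀ A(Ψ,diag z) z − z̃ᵀ A(Ψ,diag z̃) z̃|/m
  ≤ (C/m) (‖z‖₂² ‖z − z̃‖_∞ + ‖z − z̃‖₂ (‖z‖₂ + ‖z̃‖₂))`. -/
theorem stmt10 (k : ℕ) (Q : ℝ) (L : NNReal) (p : Fin (k + 1) → Polynomial ℝ) :
    ∃ C : ℝ, 0 ≤ C ∧
      ∀ (m : ℕ) (Ψ : Matrix (Fin m) (Fin m) ℝ) (q : Fin k → ℝ → ℝ) (z z' : Fin m → ℝ),
        Ψᵀ = Ψ →
        (∀ x : Fin m → ℝ, ∑ i, (Ψ.mulVec x i) ^ 2 ≤ ∑ i, x i ^ 2) →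
        (∀ i x, |q i x| ≤ Q) →
        (∀ i, LipschitzWith L (q i)) →
        |z ⬝ᵥ (((Polynomial.aeval Ψ (p 0)) *
              (List.ofFn fun i : Fin k =>
                (Matrix.diagonal fun j => q i (z j)) * Polynomial.aeval Ψ (p i.succ)).prod).mulVec z)
          - z' ⬝ᵥ (((Polynomial.aeval Ψ (p 0)) *
              (List.ofFn fun i : Fin k =>
                (Matrix.diagonal fun j => q i (z' j)) * Polynomial.aeval Ψ (p i.succ)).prod).mulVec z')| / m
        ≤ C / m * ((∑ i, z i ^ 2) * ‖z - z'‖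
            + Real.sqrt (∑ i, (z i - z' i) ^ 2)
              * (Real.sqrt (∑ i, z i ^ 2) + Real.sqrt (∑ i, z' i ^ 2))) := by
  classical
  set P : Fin (k + 1) → ℝ := fun i => ∑ j ∈ Finset.range ((p i).natDegree + 1), |(p i).coeff j|
    with hP
  have hPnn : ∀ i, 0 ≤ P i := fun i => Finset.sum_nonneg fun _ _ => abs_nonneg _
  set S : ℝ := ∑ i, P i with hS
  have hS0 : 0 ≤ S := Finset.sum_nonneg fun i _ => hPnn i
  have hPle : ∀ i, P i ≤ S := fun i =>
    Finset.single_le_sum (fun j _ => hPnn j) (Finset.mem_univ i)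
  set Q' : ℝ := max Q 0 with hQ'
  have hQ'0 : 0 ≤ Q' := le_max_right _ _
  set c : ℝ := 1 + Q' * S with hc'
  have hc : 1 ≤ c := le_add_of_nonneg_right (mul_nonneg hQ'0 hS0)
  have hc0 : (0:ℝ) ≤ c := zero_le_one.trans hc
  have hck : (0:ℝ) ≤ c ^ k := pow_nonneg hc0 k
  refine ⟨S * S * k * c ^ k * L + S * c ^ k, by positivity, ?_⟩
  intro m Ψ q z z' _hsym hop hq hlip
  have hΨ : OpB Ψ 1 := by
    intro x
    rw [one_mul]
    exact Real.sqrt_le_sqrt (hop x)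
  have hδnn : (0:ℝ) ≤ ‖z - z'‖ := norm_nonneg _
  set ε : ℝ := L * ‖z - z'‖ * S with hε'
  have hε : 0 ≤ ε := mul_nonneg (mul_nonneg (NNReal.coe_nonneg L) hδnn) hS0
  set F : Fin k → Matrix (Fin m) (Fin m) ℝ := fun i =>
    (Matrix.diagonal fun j => q i (z j)) * Polynomial.aeval Ψ (p i.succ) with hF'
  set G : Fin k → Matrix (Fin m) (Fin m) ℝ := fun i =>
    (Matrix.diagonal fun j => q i (z' j)) * Polynomial.aeval Ψ (p i.succ) with hG'
  have hQbd : ∀ (i : Fin k) (x : ℝ), |q i x| ≤ Q' := fun i x => (hq i x).trans (le_max_left _ _)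
  have hFi : ∀ (v : Fin m → ℝ) (i : Fin k),
      OpB ((Matrix.diagonal fun j => q i (v j)) * Polynomial.aeval Ψ (p i.succ)) c := by
    intro v i
    refine ((OpB.diagonal hQ'0 fun j => hQbd i (v j)).mul (hΨ.aeval (p i.succ)) hQ'0).mono ?_
    calc Q' * P i.succ ≤ Q' * S := mul_le_mul_of_nonneg_left (hPle _) hQ'0
      _ ≤ c := le_add_of_nonneg_left zero_le_one
  have hF : ∀ i, OpB (F i) c := hFi z
  have hG : ∀ i, OpB (G i) c := hFi z'
  have hd : ∀ i, OpB (F i - G i) ε := by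
    intro i
    have hFG : F i - G i =
        (Matrix.diagonal fun j => q i (z j) - q i (z' j)) * Polynomial.aeval Ψ (p i.succ) := by
      rw [hF', hG']
      rw [← sub_mul, ← Matrix.diagonal_sub]
    rw [hFG]
    have hdiag : ∀ j, |q i (z j) - q i (z' j)| ≤ (L : ℝ) * ‖z - z'‖ := by
      intro j
      have h1 := (hlip i).dist_le_mul (z j) (z' j)
      rw [Real.dist_eq, Real.dist_eq] at h1
      refine h1.trans (mul_le_mul_of_nonneg_left ?_ (NNReal.coe_nonneg L))
      have := norm_le_pi_norm (z - z') j
      simpa [Real.norm_eq_abs] using this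
    have hLδ : (0:ℝ) ≤ (L : ℝ) * ‖z - z'‖ := mul_nonneg (NNReal.coe_nonneg L) hδnn
    refine ((OpB.diagonal hLδ hdiag).mul (hΨ.aeval (p i.succ)) hLδ).mono ?_
    rw [hε']
    exact mul_le_mul_of_nonneg_left (hPle _) hLδ
  set M₁ : Matrix (Fin m) (Fin m) ℝ := Polynomial.aeval Ψ (p 0) * (List.ofFn F).prod with hM₁'
  set M₂ : Matrix (Fin m) (Fin m) ℝ := Polynomial.aeval Ψ (p 0) * (List.ofFn G).prod with hM₂'
  have hp0 : OpB (Polynomial.aeval Ψ (p 0)) S := (hΨ.aeval (p 0)).mono (hPle 0)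
  have hM2 : OpB M₂ (S * c ^ k) := by
    have hprod : OpB (List.ofFn G).prod (c ^ k) := by
      have := OpB.list_prod hc (List.ofFn G) (by
        intro A hA
        obtain ⟨i, rfl⟩ := List.mem_ofFn.mp hA
        exact hG i)
      simpa using this
    exact hp0.mul hprod hS0
  have hΔ : OpB (M₁ - M₂) (S * (k * c ^ k * ε)) := by
    rw [hM₁', hM₂', ← mul_sub]
    exact hp0.mul (OpB.tele hc hε k F G hF hG hd) hS0
  have iden : z ⬝ᵥ M₁.mulVec z - z' ⬝ᵥ M₂.mulVec z' =
      z ⬝ᵥ (M₁ - M₂).mulVec z + ((z - z') ⬝ᵥ M₂.mulVec z + z' ⬝ᵥ M₂.mulVec (z - z')) := by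
    simp only [Matrix.sub_mulVec, Matrix.mulVec_sub, sub_dotProduct,
      dotProduct_sub]
    ring
  have h1 := quad hΔ z z
  have h2 := quad hM2 (z - z') z
  have h3 := quad hM2 z' (z - z')
  have hNδ : Nrm (z - z') = Real.sqrt (∑ i, (z i - z' i) ^ 2) := by simp [Nrm]
  have hNz : Nrm z = Real.sqrt (∑ i, z i ^ 2) := by simp [Nrm]
  have hNz' : Nrm z' = Real.sqrt (∑ i, z' i ^ 2) := by simp [Nrm]
  have t1 : Nrm z * (S * (↑k * c ^ k * ε) * Nrm z)
      = (S * S * ↑k * c ^ k * ↑L) * ((∑ i, z i ^ 2) * ‖z - z'‖) := by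
    rw [hε', ← Nrm_mul_self z]; ring
  have t23 : Nrm (z - z') * (S * c ^ k * Nrm z) + Nrm z' * (S * c ^ k * Nrm (z - z'))
      = (S * c ^ k) * (Nrm (z - z') * (Nrm z + Nrm z')) := by ring
  have habs : |z ⬝ᵥ M₁.mulVec z - z' ⬝ᵥ M₂.mulVec z'|
      ≤ (S * S * ↑k * c ^ k * ↑L) * ((∑ i, z i ^ 2) * ‖z - z'‖)
        + (S * c ^ k) * (Nrm (z - z') * (Nrm z + Nrm z')) := by
    rw [iden, ← t1, ← t23]
    calc |z ⬝ᵥ (M₁ - M₂).mulVec z + ((z - z') ⬝ᵥ M₂.mulVec z + z' ⬝ᵥ M₂.mulVec (z - z'))|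
        ≤ |z ⬝ᵥ (M₁ - M₂).mulVec z| + (|(z - z') ⬝ᵥ M₂.mulVec z| + |z' ⬝ᵥ M₂.mulVec (z - z')|) :=
          (abs_add_le _ _).trans (by gcongr; exact abs_add_le _ _)
      _ ≤ _ := by linarith [h1, h2, h3]
  have hT1 : (0:ℝ) ≤ (∑ i, z i ^ 2) * ‖z - z'‖ :=
    mul_nonneg (Finset.sum_nonneg fun _ _ => sq_nonneg _) hδnn
  have hT2 : (0:ℝ) ≤ Nrm (z - z') * (Nrm z + Nrm z') :=
    mul_nonneg (Nrm_nonneg _) (add_nonneg (Nrm_nonneg _) (Nrm_nonneg _))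
  have hC1 : (0:ℝ) ≤ S * S * ↑k * c ^ k * ↑L := by positivity
  have hC2 : (0:ℝ) ≤ S * c ^ k := mul_nonneg hS0 hck
  have hfinal : |z ⬝ᵥ M₁.mulVec z - z' ⬝ᵥ M₂.mulVec z'|
      ≤ (S * S * ↑k * c ^ k * ↑L + S * c ^ k)
        * ((∑ i, z i ^ 2) * ‖z - z'‖ + Nrm (z - z') * (Nrm z + Nrm z')) := by
    refine habs.trans ?_
    have expand : (S * S * ↑k * c ^ k * ↑L + S * c ^ k)
          * ((∑ i, z i ^ 2) * ‖z - z'‖ + Nrm (z - z') * (Nrm z + Nrm z'))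
        = (S * S * ↑k * c ^ k * ↑L) * ((∑ i, z i ^ 2) * ‖z - z'‖)
          + (S * c ^ k) * (Nrm (z - z') * (Nrm z + Nrm z'))
          + ((S * S * ↑k * c ^ k * ↑L) * (Nrm (z - z') * (Nrm z + Nrm z'))
            + (S * c ^ k) * ((∑ i, z i ^ 2) * ‖z - z'‖)) := by ring
    rw [expand]
    linarith [mul_nonneg hC1 hT2, mul_nonneg hC2 hT1]
  rw [hNδ, hNz, hNz'] at hfinal
  rcases Nat.eq_zero_or_pos m with hm | hm
  · subst hm
    norm_num
  · have hm' : (0:ℝ) < m := by exact_mod_cast hm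
    rw [div_mul_eq_mul_div]
    exact (div_le_div_iff_of_pos_right hm').mpr hfinal
end

section
/- Let M₁, M₂ be symmetric positive semidefinite matrices with M₁ positive definite. Then ‖M₁^{1/2} − M₂^{1/2}‖_op ≤ ‖M₁ − M₂‖_op / √(λ_min(M₁)), where λ_min denotes the smallest eigenvalue and M^{1/2} the unique positive semidefinite square root. -/
open Matrix

/-- The positive semidefinite square root, as `Matrix.PosSemidef.sqrt` was defined in the older
Mathlib (it has since been removed in favour of `CFC.sqrt`). -/
noncomputable def Matrix.PosSemidef.sqrt {n 𝕜 : Type*} [Fintype n] [RCLike 𝕜] [PartialOrder 𝕜]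
    [DecidableEq n]
    {A : Matrix n n 𝕜} (hA : A.PosSemidef) : Matrix n n 𝕜 :=
  hA.1.eigenvectorUnitary.1 * diagonal ((↑) ∘ (Real.sqrt ∘ hA.1.eigenvalues)) *
    (star hA.1.eigenvectorUnitary : Matrix n n 𝕜)

lemma Matrix.PosSemidef.sqrt_mul_self {n : Type*} [Fintype n] [DecidableEq n]
    {A : Matrix n n ℝ} (hA : A.PosSemidef) : hA.sqrt * hA.sqrt = A := by
  have hD : diagonal ((RCLike.ofReal : ℝ → ℝ) ∘ (Real.sqrt ∘ hA.1.eigenvalues)) *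
      diagonal ((RCLike.ofReal : ℝ → ℝ) ∘ (Real.sqrt ∘ hA.1.eigenvalues)) =
      (diagonal (RCLike.ofReal ∘ hA.1.eigenvalues) : Matrix n n ℝ) := by
    rw [diagonal_mul_diagonal]; congr 1; funext i
    simp only [Function.comp_apply, RCLike.ofReal_real_eq_id, id,
      Real.mul_self_sqrt (hA.eigenvalues_nonneg i)]
  conv_rhs => rw [hA.1.spectral_theorem, Unitary.conjStarAlgAut_apply]
  simp only [Matrix.PosSemidef.sqrt]
  rw [← hD]
  simp only [mul_assoc, Unitary.coe_star]
  rw [← mul_assoc (star (hA.1.eigenvectorUnitary : Matrix n n ℝ)) (hA.1.eigenvectorUnitary : Matrix n n ℝ),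
    Unitary.star_mul_self_of_mem hA.1.eigenvectorUnitary.prop, one_mul]

lemma Matrix.PosSemidef.posSemidef_sqrt {n : Type*} [Fintype n] [DecidableEq n]
    {A : Matrix n n ℝ} (hA : A.PosSemidef) : hA.sqrt.PosSemidef := by
  unfold Matrix.PosSemidef.sqrt
  rw [star_eq_conjTranspose]
  refine PosSemidef.mul_mul_conjTranspose_same ?_ _
  rw [posSemidef_diagonal_iff]; intro i; simp [Real.sqrt_nonneg]

namespace Stmt11Aux

variable {n : ℕ}

local notation "⟪" x ", " y "⟫" => inner (𝕜 := ℝ) (E := EuclideanSpace ℝ (Fin n)) x y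

lemma inner_eq (x y : EuclideanSpace ℝ (Fin n)) : ⟪x, y⟫ = ∑ i, x i * y i := by
  simp [PiLp.inner_apply, RCLike.inner_apply, mul_comm]

/-- Parseval -/
lemma sum_sq_eq (b : OrthonormalBasis (Fin n) ℝ (EuclideanSpace ℝ (Fin n)))
    (v : EuclideanSpace ℝ (Fin n)) : ∑ i, v i ^ 2 = ∑ j, ⟪b j, v⟫ ^ 2 := by
  have h := b.sum_inner_mul_inner v v
  rw [inner_eq] at h
  simp only [← sq] at h
  rw [← h]
  congr 1; funext j
  rw [real_inner_comm v (b j)]; exact (sq _).symm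

lemma inner_mulVec (S : Matrix (Fin n) (Fin n) ℝ) (hS : S.IsHermitian)
    (v : Fin n → ℝ) (j : Fin n) :
    ⟪hS.eigenvectorBasis j, (WithLp.toLp 2 (S *ᵥ v))⟫
      = hS.eigenvalues j * ⟪hS.eigenvectorBasis j, WithLp.toLp 2 v⟫ := by
  rw [inner_eq, inner_eq]
  have h2 : (⇑(hS.eigenvectorBasis j) ⬝ᵥ (S *ᵥ v)) = (S *ᵥ ⇑(hS.eigenvectorBasis j)) ⬝ᵥ v := by
    rw [dotProduct_mulVec, ← mulVec_transpose]
    congr 1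
    have : Sᵀ = S := by
      conv_rhs => rw [← hS.eq]
      ext i k
      simp [conjTranspose_apply]
    rw [this]
  have h3 := hS.mulVec_eigenvectorBasis j
  calc ∑ i, (hS.eigenvectorBasis j) i * (S *ᵥ v) i
      = ⇑(hS.eigenvectorBasis j) ⬝ᵥ (S *ᵥ v) := rfl
    _ = (S *ᵥ ⇑(hS.eigenvectorBasis j)) ⬝ᵥ v := h2
    _ = (hS.eigenvalues j • ⇑(hS.eigenvectorBasis j)) ⬝ᵥ v := by rw [h3]
    _ = hS.eigenvalues j * ∑ i, (hS.eigenvectorBasis j) i * v i := by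
        rw [smul_dotProduct]; rfl

lemma dot_mulVec_symm (S : Matrix (Fin n) (Fin n) ℝ) (hS : S.IsHermitian)
    (u x : Fin n → ℝ) : u ⬝ᵥ (S *ᵥ x) = (S *ᵥ u) ⬝ᵥ x := by
  rw [dotProduct_mulVec, ← mulVec_transpose]
  congr 1
  have : Sᵀ = S := by
    conv_rhs => rw [← hS.eq]
    ext i k
    simp [conjTranspose_apply]
  rw [this]

lemma basis_norm_one (b : OrthonormalBasis (Fin n) ℝ (EuclideanSpace ℝ (Fin n))) (j : Fin n) :
    ∑ i, (b j) i ^ 2 = 1 := by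
  have h := sum_sq_eq b (b j)
  have hkj : ∀ k, ⟪b k, b j⟫ = if k = j then 1 else 0 := fun k => by
    rcases eq_or_ne k j with rfl | hk
    · rw [if_pos rfl, real_inner_self_eq_norm_sq, b.orthonormal.1 k, one_pow]
    · simp [b.orthonormal.2 hk, hk]
  rw [h]
  rw [Finset.sum_congr rfl fun k _ => by rw [hkj k]]
  simp

/-- quadratic form via eigendecomposition -/
lemma quadform_eq (S : Matrix (Fin n) (Fin n) ℝ) (hS : S.IsHermitian) (v : Fin n → ℝ) :
    v ⬝ᵥ (S *ᵥ v) = ∑ j, hS.eigenvalues j * ⟪hS.eigenvectorBasis j, WithLp.toLp 2 v⟫ ^ 2 := by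
  have h := (hS.eigenvectorBasis).sum_inner_mul_inner
    (WithLp.toLp 2 v) (WithLp.toLp 2 (S *ᵥ v))
  calc v ⬝ᵥ (S *ᵥ v) = ⟪(WithLp.toLp 2 v), (WithLp.toLp 2 (S *ᵥ v))⟫ := by
        rw [inner_eq]; rfl
    _ = ∑ j, ⟪(WithLp.toLp 2 v), hS.eigenvectorBasis j⟫
          * ⟪hS.eigenvectorBasis j, (WithLp.toLp 2 (S *ᵥ v))⟫ := h.symm
    _ = ∑ j, hS.eigenvalues j * ⟪hS.eigenvectorBasis j, WithLp.toLp 2 v⟫ ^ 2 := by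
        refine Finset.sum_congr rfl fun j _ => ?_
        rw [inner_mulVec S hS v j, real_inner_comm (F := EuclideanSpace ℝ (Fin n)) (WithLp.toLp 2 v) (hS.eigenvectorBasis j)]
        ring

lemma quad_bound (S : Matrix (Fin n) (Fin n) ℝ) (hS : S.IsHermitian) (c : ℝ)
    (hev : ∀ j, (hS.eigenvalues j) ^ 2 ≤ c) (v : Fin n → ℝ) :
    ∑ i, (S *ᵥ v) i ^ 2 ≤ c * ∑ i, v i ^ 2 := by
  have h1 := sum_sq_eq hS.eigenvectorBasis (WithLp.toLp 2 (S *ᵥ v))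
  have h2 := sum_sq_eq hS.eigenvectorBasis (WithLp.toLp 2 v)
  calc ∑ i, (S *ᵥ v) i ^ 2
      = ∑ j, (hS.eigenvalues j * ⟪hS.eigenvectorBasis j, WithLp.toLp 2 v⟫) ^ 2 := by
        rw [h1]; exact Finset.sum_congr rfl fun j _ => by rw [inner_mulVec S hS v j]
    _ ≤ ∑ j, c * ⟪hS.eigenvectorBasis j, WithLp.toLp 2 v⟫ ^ 2 := by
        refine Finset.sum_le_sum fun j _ => ?_
        rw [mul_pow]
        exact mul_le_mul_of_nonneg_right (hev j) (sq_nonneg _)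
    _ = c * ∑ i, v i ^ 2 := by rw [← Finset.mul_sum, ← h2]

end Stmt11Aux

/-- Perturbation bound for the matrix square root (Schmitt 1992, Lemma 2.2):
if `M₁, M₂` are positive semidefinite, `M₁ - μ•1` is positive semidefinite for some
`μ > 0` (i.e. `μ ≤ λ_min(M₁)`), and `‖M₁ - M₂‖_op ≤ d`, then
`‖√M₁ - √M₂‖_op ≤ d / √μ`.  Operator-norm bounds are expressed via the Euclidean
quadratic forms `∑ ((X *ᵥ v) i)² ≤ c² ∑ (v i)²`. -/
theorem stmt11 {n : ℕ} (M₁ M₂ : Matrix (Fin n) (Fin n) ℝ)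
    (h₁ : M₁.PosSemidef) (h₂ : M₂.PosSemidef)
    (μ : ℝ) (hμ : 0 < μ) (hmin : (M₁ - μ • 1).PosSemidef)
    (d : ℝ) (hd : ∀ v : Fin n → ℝ, ∑ i, ((M₁ - M₂).mulVec v i) ^ 2 ≤ d ^ 2 * ∑ i, v i ^ 2) :
    ∀ v : Fin n → ℝ,
      ∑ i, ((h₁.sqrt - h₂.sqrt).mulVec v i) ^ 2 ≤ (d / Real.sqrt μ) ^ 2 * ∑ i, v i ^ 2 := by
  classical
  set A := h₁.sqrt with hA
  set B := h₂.sqrt with hB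
  have hApsd : A.PosSemidef := h₁.posSemidef_sqrt
  have hBpsd : B.PosSemidef := h₂.posSemidef_sqrt
  have hAH : A.IsHermitian := hApsd.isHermitian
  have hBH : B.IsHermitian := hBpsd.isHermitian
  have hEH : (A - B).IsHermitian := hAH.sub hBH
  -- Step 1: lower bound on the quadratic form of A : √μ * ‖w‖² ≤ wᵀ A w
  have hAlow : ∀ w : Fin n → ℝ, Real.sqrt μ * ∑ i, w i ^ 2 ≤ w ⬝ᵥ (A *ᵥ w) := by
    intro w
    have hq := Stmt11Aux.quadform_eq A hAH w
    have hev : ∀ j, Real.sqrt μ ≤ hAH.eigenvalues j := by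
      intro j
      have hnn : 0 ≤ hAH.eigenvalues j := hApsd.eigenvalues_nonneg j
      have hb3 := hAH.mulVec_eigenvectorBasis j
      set u : Fin n → ℝ := ⇑(hAH.eigenvectorBasis j) with hu
      have hM1u : M₁ *ᵥ u = (hAH.eigenvalues j) ^ 2 • u := by
        have : M₁ = A * A := h₁.sqrt_mul_self.symm
        rw [this, ← mulVec_mulVec, hb3, mulVec_smul, hb3, smul_smul, sq]
      have hnorm : ∑ i, u i ^ 2 = 1 := Stmt11Aux.basis_norm_one hAH.eigenvectorBasis j
      have hpos := hmin.dotProduct_mulVec_nonneg u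
      simp only [star_trivial, sub_mulVec, smul_mulVec, one_mulVec,
        dotProduct_sub, hM1u, dotProduct_smul] at hpos
      have hdot : u ⬝ᵥ u = 1 := by
        rw [← hnorm]; exact Finset.sum_congr rfl fun i _ => (sq (u i)).symm
      rw [hdot] at hpos
      have hsq : μ ≤ (hAH.eigenvalues j) ^ 2 := by
        simpa [smul_eq_mul] using hpos
      calc Real.sqrt μ ≤ Real.sqrt ((hAH.eigenvalues j) ^ 2) := Real.sqrt_le_sqrt hsq
        _ = hAH.eigenvalues j := Real.sqrt_sq hnn
    rw [hq]
    have h2 := Stmt11Aux.sum_sq_eq hAH.eigenvectorBasis (WithLp.toLp 2 w)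
    rw [h2, Finset.mul_sum]
    exact Finset.sum_le_sum fun j _ =>
      mul_le_mul_of_nonneg_right (hev j) (sq_nonneg _)
  -- Step 2: eigenvalue bound for E = A - B
  have hev : ∀ j, (hEH.eigenvalues j) ^ 2 ≤ (d / Real.sqrt μ) ^ 2 := by
    intro j
    set lam := hEH.eigenvalues j with hlam
    set u : Fin n → ℝ := ⇑(hEH.eigenvectorBasis j) with hu
    have hEu : (A - B) *ᵥ u = lam • u := hEH.mulVec_eigenvectorBasis j
    have hnorm : ∑ i, u i ^ 2 = 1 := Stmt11Aux.basis_norm_one hEH.eigenvectorBasis j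
    set s₁ := u ⬝ᵥ (A *ᵥ u) with hs₁
    set s₂ := u ⬝ᵥ (B *ᵥ u) with hs₂
    have hs₂nn : 0 ≤ s₂ := by simpa [star_trivial] using hBpsd.dotProduct_mulVec_nonneg u
    have hs₁low : Real.sqrt μ ≤ s₁ := by
      have := hAlow u
      rwa [hnorm, mul_one] at this
    have hslow : Real.sqrt μ ≤ s₁ + s₂ := le_add_of_le_of_nonneg hs₁low hs₂nn
    have hsnn : 0 ≤ s₁ + s₂ := le_trans (Real.sqrt_nonneg μ) hslow
    -- key identity
    have hkey : u ⬝ᵥ ((M₁ - M₂) *ᵥ u) = lam * (s₁ + s₂) := by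
      have hM : M₁ - M₂ = (A - B) * A + B * (A - B) := by
        rw [← h₁.sqrt_mul_self, ← h₂.sqrt_mul_self, ← hA, ← hB]
        noncomm_ring
      rw [hM, add_mulVec, dotProduct_add, ← mulVec_mulVec, ← mulVec_mulVec,
        Stmt11Aux.dot_mulVec_symm (A - B) hEH u (A *ᵥ u), hEu, mulVec_smul,
        smul_dotProduct, dotProduct_smul]
      simp only [smul_eq_mul]
      ring
    have hcs : (u ⬝ᵥ ((M₁ - M₂) *ᵥ u)) ^ 2 ≤ d ^ 2 := by
      have h1 : (u ⬝ᵥ ((M₁ - M₂) *ᵥ u)) ^ 2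
          ≤ (∑ i, u i ^ 2) * ∑ i, ((M₁ - M₂) *ᵥ u) i ^ 2 :=
        Finset.sum_mul_sq_le_sq_mul_sq Finset.univ u ((M₁ - M₂) *ᵥ u)
      have h2 := hd u
      rw [hnorm, one_mul] at h1
      rw [hnorm, mul_one] at h2
      exact h1.trans h2
    rw [hkey] at hcs
    have hmusq : μ ≤ (s₁ + s₂) ^ 2 := by
      have := pow_le_pow_left₀ (Real.sqrt_nonneg μ) hslow 2
      rwa [Real.sq_sqrt hμ.le] at this
    have hmul : lam ^ 2 * μ ≤ d ^ 2 := by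
      calc lam ^ 2 * μ ≤ lam ^ 2 * (s₁ + s₂) ^ 2 :=
            mul_le_mul_of_nonneg_left hmusq (sq_nonneg _)
        _ = (lam * (s₁ + s₂)) ^ 2 := (mul_pow _ _ _).symm
        _ ≤ d ^ 2 := hcs
    rw [div_pow, Real.sq_sqrt hμ.le]
    rw [le_div_iff₀ hμ]
    exact hmul
  intro v
  exact Stmt11Aux.quad_bound (A - B) hEH _ hev v
end
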